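/- arXiv:1710.05017 — 5 statements merged into one kernel-verified Lean document; each statement's English description precedes it below -/
import Mathlib

section
/- For any continuous convex function f : ℝ → ℝ, the map A ↦ Tr(f(A)) is convex on the space of n×n real symmetric matrices, where f(A) is defined via the spectral decomposition by applying f to each eigenvalue. -/
/-! For an orthogonal `U` and a symmetric `A = V D Vᵀ`, the diagonal of `Uᵀ A U` is the image of
the eigenvalue vector under the doubly stochastic matrix `(Qᵢⱼ²)`, `Q = Uᵀ V`; by Jensen,
`∑ᵢ f((Uᵀ A U)ᵢᵢ) ≤ Tr f(A)` (Peierls), with equality when `U` diagonalises `A`. So `Tr f` is a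
supremum of the convex functions `A ↦ ∑ᵢ f((Uᵀ A U)ᵢᵢ)`: taking `U` to diagonalise `a A + b B`
gives the convexity inequality. -/

open scoped BigOperators

noncomputable section

/-- `Tr f(A)`: apply `f : ℝ → ℝ` to each eigenvalue of the symmetric matrix `A`
(via the spectral decomposition) and sum; junk value `0` for non-symmetric matrices. -/
def traceFun {n : ℕ} (f : ℝ → ℝ) (A : Matrix (Fin n) (Fin n) ℝ) : ℝ :=
  if h : A.IsHermitian then ∑ i, f (h.eigenvalues i) else 0

open Finset Matrix

theorem ConvexOn.sum_map_sum_smul_le {𝕜 E β ι : Type*} [Field 𝕜] [LinearOrder 𝕜]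
    [IsStrictOrderedRing 𝕜] [AddCommGroup E] [AddCommGroup β] [PartialOrder β]
    [IsOrderedAddMonoid β] [Module 𝕜 E] [Module 𝕜 β] [IsStrictOrderedModule 𝕜 β]
    [Fintype ι] [DecidableEq ι] {s : Set E} {f : E → β} (hf : ConvexOn 𝕜 s f)
    {P : Matrix ι ι 𝕜} (hP : P ∈ doublyStochastic 𝕜 ι) {x : ι → E} (hx : ∀ j, x j ∈ s) :
    ∑ i, f (∑ j, P i j • x j) ≤ ∑ j, f (x j) :=
  calc ∑ i, f (∑ j, P i j • x j)
      ≤ ∑ i, ∑ j, P i j • f (x j) := sum_le_sum fun i _ ↦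
        hf.map_sum_le (fun j _ ↦ nonneg_of_mem_doublyStochastic hP)
          (sum_row_of_mem_doublyStochastic hP i) fun j _ ↦ hx j
    _ = ∑ j, f (x j) := by
        rw [sum_comm]
        simp only [← sum_smul, sum_col_of_mem_doublyStochastic hP, one_smul]

namespace Matrix

theorem convex_setOf_isHermitian {ι 𝕜 : Type*} [RCLike 𝕜] :
    Convex ℝ {A : Matrix ι ι 𝕜 | A.IsHermitian} :=
  fun _ hA _ hB a b _ _ _ ↦ (hA.smul (.all a)).add (hB.smul (.all b))

variable {ι : Type*} [Fintype ι] [DecidableEq ι]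

theorem hadamard_self_mem_doublyStochastic {Q : Matrix ι ι ℝ} (hQ : Q ∈ unitaryGroup ι ℝ) :
    Q ⊙ Q ∈ doublyStochastic ℝ ι := by
  refine mem_doublyStochastic_iff_sum.2 ⟨fun i j ↦ mul_self_nonneg _, fun i ↦ ?_, fun j ↦ ?_⟩
  · simpa [mul_apply, one_apply] using congrFun₂ (mem_unitaryGroup_iff.1 hQ) i i
  · simpa [mul_apply, one_apply] using congrFun₂ (mem_unitaryGroup_iff'.1 hQ) j j

theorem mul_diagonal_mul_star_apply_self (Q : Matrix ι ι ℝ) (d : ι → ℝ) (i : ι) :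
    (Q * diagonal d * star Q) i i = ∑ j, (Q ⊙ Q) i j * d j := by
  simp only [mul_apply, diagonal_apply, star_apply, hadamard_apply, star_trivial, mul_ite, mul_zero,
    sum_ite_eq', mem_univ, if_true]
  exact sum_congr rfl fun j _ ↦ by ring

namespace IsHermitian

variable {A : Matrix ι ι ℝ}

theorem eq_eigenvectorUnitary_mul_diagonal_mul_star (hA : A.IsHermitian) :
    A = hA.eigenvectorUnitary * diagonal hA.eigenvalues *
      star (hA.eigenvectorUnitary : Matrix ι ι ℝ) := by
  simpa using hA.spectral_theorem

theorem eigenvalues_eq_star_mul_mul_apply (hA : A.IsHermitian) (i : ι) :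
    hA.eigenvalues i =
      (star (hA.eigenvectorUnitary : Matrix ι ι ℝ) * A * hA.eigenvectorUnitary) i i := by
  simpa using congrFun₂ hA.conjStarAlgAut_star_eigenvectorUnitary.symm i i

theorem sum_map_star_mul_mul_apply_le {f : ℝ → ℝ} (hf : ConvexOn ℝ Set.univ f)
    (hA : A.IsHermitian) {U : Matrix ι ι ℝ} (hU : U ∈ unitaryGroup ι ℝ) :
    ∑ i, f ((star U * A * U) i i) ≤ ∑ i, f (hA.eigenvalues i) := by
  let Q := star U * (hA.eigenvectorUnitary : Matrix ι ι ℝ)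
  have hQ : Q ∈ unitaryGroup ι ℝ := mul_mem (Unitary.star_mem hU) hA.eigenvectorUnitary.2
  have hconj : star U * A * U = Q * diagonal hA.eigenvalues * star Q := by
    conv_lhs => rw [hA.eq_eigenvectorUnitary_mul_diagonal_mul_star]
    simp only [Q, star_mul, star_star, Matrix.mul_assoc]
  simp only [hconj, mul_diagonal_mul_star_apply_self]
  exact hf.sum_map_sum_smul_le (hadamard_self_mem_doublyStochastic hQ) fun _ ↦ trivial

end IsHermitian
end Matrix

theorem traceFun_of_isHermitian {n : ℕ} (f : ℝ → ℝ) {A : Matrix (Fin n) (Fin n) ℝ}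
    (hA : A.IsHermitian) : traceFun f A = ∑ i, f (hA.eigenvalues i) :=
  dif_pos hA

theorem stmt2_general (n : ℕ) (f : ℝ → ℝ)
    (hconv : ConvexOn ℝ Set.univ f) :
    ConvexOn ℝ {A : Matrix (Fin n) (Fin n) ℝ | A.IsHermitian} (traceFun f) := by
  refine ⟨convex_setOf_isHermitian, fun A hA B hB a b ha hb hab ↦ ?_⟩
  have hC : (a • A + b • B).IsHermitian := convex_setOf_isHermitian hA hB ha hb hab
  let U : Matrix (Fin n) (Fin n) ℝ := hC.eigenvectorUnitary
  have hU : U ∈ unitaryGroup _ ℝ := hC.eigenvectorUnitary.2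
  calc traceFun f (a • A + b • B)
      = ∑ i, f (a * (star U * A * U) i i + b * (star U * B * U) i i) := by
        simp only [traceFun_of_isHermitian f hC, hC.eigenvalues_eq_star_mul_mul_apply, U,
          Matrix.mul_add, Matrix.add_mul, Matrix.mul_smul, Matrix.smul_mul, Matrix.add_apply,
          Matrix.smul_apply, smul_eq_mul]
    _ ≤ ∑ i, (a * f ((star U * A * U) i i) + b * f ((star U * B * U) i i)) :=
        sum_le_sum fun i _ ↦ hconv.2 trivial trivial ha hb hab
    _ = a * ∑ i, f ((star U * A * U) i i) + b * ∑ i, f ((star U * B * U) i i) := by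
        rw [sum_add_distrib, mul_sum, mul_sum]
    _ ≤ a • traceFun f A + b • traceFun f B := by
        rw [traceFun_of_isHermitian f hA, traceFun_of_isHermitian f hB, smul_eq_mul, smul_eq_mul]
        gcongr a * ?_ + b * ?_
        exacts [hA.sum_map_star_mul_mul_apply_le hconv hU,
          hB.sum_map_star_mul_mul_apply_le hconv hU]

/-- For any continuous convex `f : ℝ → ℝ`, the map `A ↦ Tr f(A)` is convex on the space of
`n × n` real symmetric matrices. -/
theorem stmt2 (n : ℕ) (f : ℝ → ℝ) (hf : Continuous f)
    (hconv : ConvexOn ℝ Set.univ f) :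
    ConvexOn ℝ {A : Matrix (Fin n) (Fin n) ℝ | A.IsHermitian} (traceFun f) :=
  stmt2_general n f hconv
end
end

section
/- Let d, n, t be positive integers with t ≤ d. The number of 3-uniform hypergraphs on vertex set [n] with exactly t hyperedges (no repeated hyperedges) in which every vertex has even degree is at most n^{3t/2} · t^{Ct} for some absolute constant C. Consequently, ∑_{t=1}^{d} (number of even-degree 3-uniform hypergraphs with t edges) · λ^{2t} n^{-3t} ≤ ∑_{t=1}^d n^{3t/2} t^{Ct} λ^{2t} n^{-3t}, which tends to 0 as n → ∞ whenever λ² ≤ n^{3/2−ε} for a constant ε > 0 and d ≤ n^{cε} for a sufficiently small constant c > 0. -/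
/-!
Let `H` be a 3-uniform hypergraph with `t` edges and all degrees even. Summing degrees gives
`3t`, so `t` is even, and every vertex of `H` has degree at least `2`, so `H` spans at most
`3t/2` vertices. Hence `H` is a `t`-subset of the `3`-multisets over a set `S` of at most `3t/2`
vertices: there are at most `(3t/2) n^{3t/2}` choices for `S` and at most
`multichoose (3t/2) 3 ^ t` for the edges, which gives `n^{3t/2} t^{10t}`. Plugging this into the
sum, each summand is at most `n^{-3ε/4}` as soon as `t ≤ n^{ε/40}`, and there are at most
`n^{ε/40}` of them.
-/

open scoped BigOperators Classical
open Filter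

noncomputable section

/-- The number of 3-uniform hypergraphs on vertex set `[n]` with exactly `t` distinct
hyperedges (each hyperedge a 3-element multiset of `[n]`) in which every vertex has even
total degree (counted with multiplicity). -/
def evenHypCount (n t : ℕ) : ℕ :=
  (Finset.univ.filter fun H : Finset (Sym (Fin n) 3) =>
      H.card = t ∧ ∀ i : Fin n, Even (∑ e ∈ H, (e : Multiset (Fin n)).count i)).card

open Finset Topology

theorem Finset.card_sym {α : Type*} [DecidableEq α] (s : Finset α) (k : ℕ) :
    #(s.sym k) = Nat.multichoose #s k := by
  conv_lhs => rw [← s.attach_map_val, sym_map, card_map, ← univ_eq_attach, sym_univ, card_univ,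
    Sym.card_sym_eq_multichoose, Fintype.card_coe]

namespace Hypergraph

variable {α : Type*} [DecidableEq α] {k : ℕ}

def degree (H : Finset (Sym α k)) (a : α) : ℕ := ∑ e ∈ H, Multiset.count a e

def vertices (H : Finset (Sym α k)) : Finset α := H.biUnion fun e => (e : Multiset α).toFinset

theorem mem_vertices {H : Finset (Sym α k)} {a : α} : a ∈ vertices H ↔ ∃ e ∈ H, a ∈ e := by
  simp [vertices, Sym.mem_coe]

theorem subset_sym_vertices (H : Finset (Sym α k)) : H ⊆ (vertices H).sym k :=
  fun e he => mem_sym_iff.2 fun _ ha => mem_vertices.2 ⟨e, he, ha⟩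

theorem degree_pos {H : Finset (Sym α k)} {a : α} (ha : a ∈ vertices H) : 0 < degree H a := by
  obtain ⟨e, he, hae⟩ := mem_vertices.1 ha
  exact lt_of_lt_of_le (Multiset.count_pos.2 hae)
    (single_le_sum (f := fun e : Sym α k => Multiset.count a e) (fun _ _ => Nat.zero_le _) he)

theorem sum_degree_vertices (H : Finset (Sym α k)) : ∑ a ∈ vertices H, degree H a = k * #H := by
  unfold degree
  rw [sum_comm, sum_const_nat fun e he => ?_, mul_comm]
  exact (Multiset.sum_count_eq_card fun a ha => mem_vertices.2 ⟨e, he, ha⟩).trans e.2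

theorem two_mul_card_vertices_le {H : Finset (Sym α k)} (heven : ∀ a, Even (degree H a)) :
    2 * #(vertices H) ≤ k * #H := by
  rw [← sum_degree_vertices, mul_comm, ← smul_eq_mul]
  refine card_nsmul_le_sum _ _ _ fun a ha => ?_
  obtain ⟨m, hm⟩ := heven a
  have := degree_pos ha
  omega

theorem even_mul_card {H : Finset (Sym α k)} (heven : ∀ a, Even (degree H a)) :
    Even (k * #H) :=
  sum_degree_vertices H ▸ even_sum _ fun a _ => heven a

theorem vertices_nonempty {H : Finset (Sym α k)} (hH : H.Nonempty) (hk : 0 < k) :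
    (vertices H).Nonempty := by
  obtain ⟨e, he⟩ := hH
  obtain ⟨a, ha⟩ :=
    Multiset.card_pos_iff_exists_mem.1 (e.2.symm ▸ hk : 0 < Multiset.card (e : Multiset α))
  exact ⟨a, mem_vertices.2 ⟨e, he, ha⟩⟩

end Hypergraph

theorem card_biUnion_powersetCard_Icc_le {α : Type*} [Fintype α] [DecidableEq α] (K : ℕ) :
    #((Icc 1 K).biUnion fun j => (univ : Finset α).powersetCard j) ≤ K * Fintype.card α ^ K := by
  calc _ ≤ ∑ j ∈ Icc 1 K, #((univ : Finset α).powersetCard j) := card_biUnion_le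
    _ ≤ ∑ _j ∈ Icc 1 K, Fintype.card α ^ K := sum_le_sum fun j hj => ?_
    _ = K * Fintype.card α ^ K := by simp
  obtain ⟨hj1, hjK⟩ := mem_Icc.1 hj
  rw [card_powersetCard, card_univ]
  refine (Nat.choose_le_pow _ _).trans ?_
  rcases Nat.eq_zero_or_pos (Fintype.card α) with h0 | hpos
  · simp [h0, zero_pow (by omega : j ≠ 0)]
  · exact Nat.pow_le_pow_right hpos hjK

open Hypergraph in
theorem card_le_of_card_vertices_le {α : Type*} [Fintype α] [DecidableEq α] {k t K : ℕ}
    {𝓗 : Finset (Finset (Sym α k))}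
    (h𝓗 : ∀ H ∈ 𝓗, #H = t ∧ (vertices H).Nonempty ∧ #(vertices H) ≤ K) :
    #𝓗 ≤ K * Fintype.card α ^ K * Nat.multichoose K k ^ t := by
  set 𝒮 := (Icc 1 K).biUnion fun j => (univ : Finset α).powersetCard j
  have hsub : 𝓗 ⊆ 𝒮.biUnion fun S => (S.sym k).powersetCard t := by
    intro H hH
    obtain ⟨hcard, hne, hle⟩ := h𝓗 H hH
    refine mem_biUnion.2 ⟨vertices H, mem_biUnion.2 ⟨#(vertices H), ?_, ?_⟩, ?_⟩
    · exact mem_Icc.2 ⟨card_pos.2 hne, hle⟩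
    · exact mem_powersetCard.2 ⟨subset_univ _, rfl⟩
    · exact mem_powersetCard.2 ⟨subset_sym_vertices H, hcard⟩
  have hedges : ∀ S ∈ 𝒮, #((S.sym k).powersetCard t) ≤ Nat.multichoose K k ^ t := by
    intro S hS
    obtain ⟨j, hj, hSj⟩ := mem_biUnion.1 hS
    have hSK : #S ≤ K := (mem_powersetCard.1 hSj).2 ▸ (mem_Icc.1 hj).2
    rw [card_powersetCard, card_sym]
    refine (Nat.choose_le_pow _ _).trans (Nat.pow_le_pow_left ?_ t)
    rw [Nat.multichoose_eq, Nat.multichoose_eq]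
    exact Nat.choose_le_choose _ (by omega)
  calc #𝓗 ≤ ∑ S ∈ 𝒮, #((S.sym k).powersetCard t) := (card_le_card hsub).trans card_biUnion_le
    _ ≤ #𝒮 * Nat.multichoose K k ^ t := by
      simpa only [sum_const, smul_eq_mul] using sum_le_sum hedges
    _ ≤ K * Fintype.card α ^ K * Nat.multichoose K k ^ t :=
      Nat.mul_le_mul_right _ (card_biUnion_powersetCard_Icc_le (α := α) K)

theorem evenHypCount_eq_zero_of_odd {n t : ℕ} (ht : Odd t) : evenHypCount n t = 0 := by
  rw [evenHypCount, card_eq_zero, filter_eq_empty_iff]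
  rintro H - ⟨rfl, heven⟩
  have := Hypergraph.even_mul_card heven
  rw [Nat.even_mul] at this
  exact (Nat.not_even_iff_odd.2 ht) (this.resolve_left (by decide))

theorem evenHypCount_two_mul_le (n m : ℕ) (hm : 0 < m) :
    evenHypCount n (2 * m) ≤ 3 * m * n ^ (3 * m) * Nat.multichoose (3 * m) 3 ^ (2 * m) := by
  rw [evenHypCount]
  refine (card_le_of_card_vertices_le fun H hH => ?_).trans_eq (by rw [Fintype.card_fin])
  obtain ⟨hcard, heven⟩ := (mem_filter.1 hH).2
  have := Hypergraph.two_mul_card_vertices_le heven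
  exact ⟨hcard, Hypergraph.vertices_nonempty (card_pos.1 (by omega)) (by norm_num), by omega⟩

theorem evenHypCount_two_mul_le_pow (n m : ℕ) (hm : 0 < m) :
    evenHypCount n (2 * m) ≤ n ^ (3 * m) * (2 * m) ^ (10 * (2 * m)) := by
  have hsizes : 3 * m ≤ (2 * m) ^ (2 * m) :=
    calc 3 * m ≤ (2 * m) ^ 2 := by nlinarith
      _ ≤ (2 * m) ^ (2 * m) := Nat.pow_le_pow_right (by omega) (by omega)
  have hside : 3 * m + 3 - 1 ≤ (2 * m) ^ 3 := by
    have : m ≤ m ^ 3 := Nat.le_self_pow (by norm_num) m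
    rw [mul_pow]
    omega
  have hedges : Nat.multichoose (3 * m) 3 ≤ ((2 * m) ^ 3) ^ 3 :=
    calc Nat.multichoose (3 * m) 3 ≤ (3 * m + 3 - 1) ^ 3 :=
          Nat.multichoose_eq _ _ ▸ Nat.choose_le_pow _ _
      _ ≤ ((2 * m) ^ 3) ^ 3 := Nat.pow_le_pow_left hside 3
  calc evenHypCount n (2 * m)
      ≤ 3 * m * n ^ (3 * m) * Nat.multichoose (3 * m) 3 ^ (2 * m) := evenHypCount_two_mul_le n m hm
    _ ≤ (2 * m) ^ (2 * m) * n ^ (3 * m) * (((2 * m) ^ 3) ^ 3) ^ (2 * m) := by gcongr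
    _ = n ^ (3 * m) * (2 * m) ^ (10 * (2 * m)) := by generalize 2 * m = t; ring

theorem evenHypCount_le_rpow (n t : ℕ) (ht : 1 ≤ t) :
    (evenHypCount n t : ℝ) ≤ (n : ℝ) ^ ((3 * (t : ℝ)) / 2) * (t : ℝ) ^ (10 * (t : ℝ)) := by
  rcases Nat.even_or_odd t with ⟨m, rfl⟩ | hodd
  · rw [← two_mul] at ht ⊢
    have hexp₁ : 3 * ((2 * m : ℕ) : ℝ) / 2 = ((3 * m : ℕ) : ℝ) := by push_cast; ring
    have hexp₂ : 10 * ((2 * m : ℕ) : ℝ) = ((10 * (2 * m) : ℕ) : ℝ) := by push_cast; ring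
    rw [hexp₁, hexp₂, Real.rpow_natCast, Real.rpow_natCast]
    exact_mod_cast evenHypCount_two_mul_le_pow n m (by omega)
  · rw [evenHypCount_eq_zero_of_odd hodd, Nat.cast_zero]
    positivity

theorem summand_le_rpow {x a lam C ε : ℝ} {t : ℕ} (hx : 1 ≤ x) (hC : 0 < C) (hε : 0 ≤ ε)
    (ht : 1 ≤ t) (ha : a ≤ x ^ (3 * (t : ℝ) / 2) * (t : ℝ) ^ (C * t))
    (hlam : lam ^ 2 ≤ x ^ (3 / 2 - ε)) (htx : (t : ℝ) ≤ x ^ (1 / (4 * C) * ε)) :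
    a * lam ^ (2 * t) * x ^ (-(3 * (t : ℝ))) ≤ x ^ (-(3 / 4 * ε)) := by
  have hx₀ : 0 < x := by linarith
  have hpow : (t : ℝ) ^ (C * t) ≤ x ^ (ε / 4 * t) :=
    calc (t : ℝ) ^ (C * t) ≤ (x ^ (1 / (4 * C) * ε)) ^ (C * t) :=
          Real.rpow_le_rpow (Nat.cast_nonneg t) htx (by positivity)
      _ = x ^ (ε / 4 * t) := by
          rw [← Real.rpow_mul hx₀.le]
          congr 1
          field_simp
  have hlam_pow : lam ^ (2 * t) ≤ x ^ ((3 / 2 - ε) * t) :=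
    calc lam ^ (2 * t) = (lam ^ 2) ^ t := pow_mul lam 2 t
      _ ≤ (x ^ (3 / 2 - ε)) ^ t := pow_le_pow_left₀ (sq_nonneg lam) hlam t
      _ = x ^ ((3 / 2 - ε) * t) := by rw [← Real.rpow_natCast, ← Real.rpow_mul hx₀.le]
  have hlam_nonneg : 0 ≤ lam ^ (2 * t) := by rw [pow_mul]; positivity
  calc a * lam ^ (2 * t) * x ^ (-(3 * (t : ℝ)))
      ≤ x ^ (3 * (t : ℝ) / 2) * x ^ (ε / 4 * t) * x ^ ((3 / 2 - ε) * t) * x ^ (-(3 * (t : ℝ))) := by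
        gcongr
        exact ha.trans (by gcongr)
    _ = x ^ (-(3 / 4 * ε) * t) := by
        rw [← Real.rpow_add hx₀, ← Real.rpow_add hx₀, ← Real.rpow_add hx₀]
        ring_nf
    _ ≤ x ^ (-(3 / 4 * ε)) := by
        refine Real.rpow_le_rpow_of_exponent_le hx ?_
        have : (1 : ℝ) ≤ t := by exact_mod_cast ht
        nlinarith

theorem tendsto_sum_of_le_rpow {f : ℕ → ℕ → ℝ} {C ε : ℝ} (hC : 1 ≤ C) (hε : 0 < ε)
    (hf₀ : ∀ n t, 0 ≤ f n t)
    (hf : ∀ n t, 1 ≤ t → f n t ≤ (n : ℝ) ^ (3 * (t : ℝ) / 2) * (t : ℝ) ^ (C * t))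
    {lam : ℕ → ℝ} {d : ℕ → ℕ} (hlam : ∀ n : ℕ, lam n ^ 2 ≤ (n : ℝ) ^ (3 / 2 - ε))
    (hd : ∀ n : ℕ, (d n : ℝ) ≤ (n : ℝ) ^ (1 / (4 * C) * ε)) :
    Tendsto (fun n : ℕ => ∑ t ∈ Icc 1 (d n), f n t * lam n ^ (2 * t) * (n : ℝ) ^ (-(3 * (t : ℝ))))
      atTop (𝓝 0) := by
  have hnonneg : ∀ n, 0 ≤ ∑ t ∈ Icc 1 (d n), f n t * lam n ^ (2 * t) * (n : ℝ) ^ (-(3 * (t : ℝ))) :=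
    fun n => sum_nonneg fun t _ => by
      have : 0 ≤ lam n ^ (2 * t) := by rw [pow_mul]; positivity
      have := hf₀ n t
      positivity
  have hbound : ∀ᶠ n : ℕ in atTop,
      ∑ t ∈ Icc 1 (d n), f n t * lam n ^ (2 * t) * (n : ℝ) ^ (-(3 * (t : ℝ)))
        ≤ (n : ℝ) ^ (1 / (4 * C) * ε + -(3 / 4 * ε)) := by
    filter_upwards [eventually_ge_atTop 1] with n hn
    have hx : (1 : ℝ) ≤ n := by exact_mod_cast hn
    calc _ ≤ ∑ _t ∈ Icc 1 (d n), (n : ℝ) ^ (-(3 / 4 * ε)) := sum_le_sum fun t ht => by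
          obtain ⟨ht₁, htd⟩ := mem_Icc.1 ht
          exact summand_le_rpow hx (by linarith) hε.le ht₁ (hf n t ht₁) (hlam n)
            ((Nat.cast_le.2 htd).trans (hd n))
      _ = d n * (n : ℝ) ^ (-(3 / 4 * ε)) := by simp
      _ ≤ (n : ℝ) ^ (1 / (4 * C) * ε) * (n : ℝ) ^ (-(3 / 4 * ε)) := by gcongr; exact hd n
      _ = (n : ℝ) ^ (1 / (4 * C) * ε + -(3 / 4 * ε)) := (Real.rpow_add (by linarith) _ _).symm
  have hexp : 1 / (4 * C) * ε + -(3 / 4 * ε) < 0 := by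
    have : 1 / (4 * C) ≤ 1 / 4 := by gcongr; linarith
    nlinarith
  refine squeeze_zero' (Eventually.of_forall hnonneg) hbound ?_
  have := (tendsto_rpow_neg_atTop (neg_pos.2 hexp)).comp tendsto_natCast_atTop_atTop
  rwa [neg_neg] at this

/-- Even-degree 3-uniform hypergraphs with `t` edges number at most `n^{3t/2} · t^{Ct}`,
and consequently `∑_{t=1}^{d} (count) · λ^{2t} n^{-3t} → 0` as `n → ∞` whenever
`λ² ≤ n^{3/2−ε}` and `d ≤ n^{cε}` for a sufficiently small constant `c > 0`. -/
theorem stmt6 :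
    ∃ C : ℝ, 0 < C ∧
      (∀ n t : ℕ, 1 ≤ t →
        (evenHypCount n t : ℝ) ≤ (n : ℝ) ^ ((3 * (t : ℝ)) / 2) * (t : ℝ) ^ (C * (t : ℝ))) ∧
      ∀ ε : ℝ, 0 < ε →
        ∃ c : ℝ, 0 < c ∧
          ∀ (lam : ℕ → ℝ) (d : ℕ → ℕ),
            (∀ n : ℕ, (lam n) ^ 2 ≤ (n : ℝ) ^ ((3 : ℝ) / 2 - ε)) →
            (∀ n : ℕ, (d n : ℝ) ≤ (n : ℝ) ^ (c * ε)) →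
            Tendsto (fun n : ℕ => ∑ t ∈ Finset.Icc 1 (d n),
                (evenHypCount n t : ℝ) * (lam n) ^ (2 * t) * (n : ℝ) ^ (-(3 * (t : ℝ))))
              atTop (nhds 0) := by
  refine ⟨10, by norm_num, evenHypCount_le_rpow, fun ε hε => ⟨1 / (4 * 10), by norm_num, ?_⟩⟩
  intro lam d hlam hd
  exact tendsto_sum_of_le_rpow (by norm_num) hε (fun _ _ => Nat.cast_nonneg _)
    evenHypCount_le_rpow hlam hd
end
end

section
/- Let ν be a product probability distribution on I = 𝒜^N, let Θ be a distribution over subsets of [N], and define ρ(D,Θ) = max_{α ⊆ [N], |α| ≥ D} Pr_{S∼Θ}[α ⊆ S]. Let R : I → ℝ^{ℓ×ℓ} be a matrix-valued function and for each S ⊆ [N] let P_S : 𝒜^S → ℝ^{ℓ×ℓ} be a matrix-valued function depending only on coordinates in S. Then E_{I∼ν} E_{S∼Θ} ⟨P_S(I_S), R(I)⟩ ≥ E_{S∼Θ} E_{I∼ν} ⟨P_S(I_S), R_S^{<D}(I_S)⟩ − ρ(D,Θ)^{1/2} · (E_{S∼Θ} ‖P_S‖²_{Fr,ν})^{1/2}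 · ‖R‖_{Fr,ν}, where R_S(I_S) = E_{I_{S̄}∼ν}[R(I)] and R_S^{<D} is its truncation to Fourier characters of degree < D. -/
/-!
Expand everything in the orthonormal character basis `χ_α`. By Parseval both sides become sums
over characters of `tr (P̂_S(α) R̂(α))`, and since `P_S` depends only on the coordinates in `S`,
`P̂_S(α) = 0` unless `supp α ⊆ S`. Hence the gap between the two sides is the contribution of the
characters with `supp α ⊆ S` and `|supp α| ≥ D`. Weighted Cauchy–Schwarz bounds it by
`(E_S ∑_α ‖P̂_S(α)‖²)^{1/2} (E_S ∑_{α ⊆ S, |α| ≥ D} ‖R̂(α)‖²)^{1/2}`, and exchanging the sums in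
the second factor gives `∑_{|α| ≥ D} Pr_S[α ⊆ S] ‖R̂(α)‖² ≤ ρ ‖R‖²_{Fr,ν}`.
-/

open scoped BigOperators Classical

noncomputable section

namespace Stmt7

variable {A : Type*} [Fintype A]

/-- Expectation under the product measure `ν` on `𝒜^N` with single-coordinate weights `w`. -/
def pExp {N : ℕ} (w : A → ℝ) (f : (Fin N → A) → ℝ) : ℝ :=
  ∑ x : Fin N → A, (∏ i, w (x i)) * f x

/-- The character `χ_α` on `𝒜^N` built from an orthonormal single-coordinate basis `e`
(with `e 0` the constant function `1`). -/
def char {N K : ℕ} (e : Fin (K + 1) → A → ℝ) (α : Fin N → Fin (K + 1))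
    (x : Fin N → A) : ℝ :=
  ∏ i, e (α i) (x i)

/-- The support (set of non-constant coordinates) of a character index, whose
cardinality is the degree of `χ_α`. -/
def suppOf {N K : ℕ} (α : Fin N → Fin (K + 1)) : Finset (Fin N) :=
  Finset.univ.filter fun i => α i ≠ 0

/-- The matrix-valued Fourier coefficient `R̂_α` with respect to `ν`. -/
def fCoeff {N K l : ℕ} (w : A → ℝ) (e : Fin (K + 1) → A → ℝ)
    (R : (Fin N → A) → Matrix (Fin l) (Fin l) ℝ) (α : Fin N → Fin (K + 1)) :
    Matrix (Fin l) (Fin l) ℝ :=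
  Matrix.of fun a b => pExp w fun x => char e α x * R x a b

/-- `R_S^{<D}`: the part of the Fourier expansion of `R` supported on characters living
inside `S` and of degree `< D` (this is the degree-`<D` truncation of
`R_S(I_S) = E_{I_{S̄} ∼ ν} R(I)`). -/
def truncRestrict {N K l : ℕ} (w : A → ℝ) (e : Fin (K + 1) → A → ℝ)
    (R : (Fin N → A) → Matrix (Fin l) (Fin l) ℝ) (S : Finset (Fin N)) (D : ℕ)
    (x : Fin N → A) : Matrix (Fin l) (Fin l) ℝ :=
  ∑ α ∈ Finset.univ.filter
      (fun α : Fin N → Fin (K + 1) => suppOf α ⊆ S ∧ (suppOf α).card < D),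
    char e α x • fCoeff w e R α

/-- Squared Frobenius norm of a matrix. -/
def frobSq {l : ℕ} (M : Matrix (Fin l) (Fin l) ℝ) : ℝ := ∑ a, ∑ b, (M a b) ^ 2

lemma frobSq_nonneg {l : ℕ} (M : Matrix (Fin l) (Fin l) ℝ) : 0 ≤ frobSq M := by
  unfold frobSq
  positivity

lemma abs_trace_mul_le {l : ℕ} (M Q : Matrix (Fin l) (Fin l) ℝ) :
    |(M * Q).trace| ≤ √(frobSq M) * √(frobSq Q) := by
  have key : ∀ M' : Matrix (Fin l) (Fin l) ℝ, (M' * Q).trace ≤ √(frobSq M') * √(frobSq Q) := by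
    intro M'
    have h := Real.sum_mul_le_sqrt_mul_sqrt (Finset.univ ×ˢ Finset.univ)
      (fun p : Fin l × Fin l => M' p.1 p.2) (fun p => Q p.2 p.1)
    rw [frobSq, frobSq, Finset.sum_comm (f := fun a b => Q a b ^ 2)]
    simpa only [Finset.sum_product, Matrix.trace, Matrix.diag, Matrix.mul_apply] using h
  have hneg := key (-M)
  have hfrob : frobSq (-M) = frobSq M := by simp only [frobSq, Matrix.neg_apply, neg_sq]
  rw [Matrix.neg_mul, Matrix.trace_neg, hfrob] at hneg
  exact abs_le.mpr ⟨by linarith, key M⟩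

lemma sum_mul_sum_sqrt_mul_sqrt_le {ι κ : Type*} (s : Finset ι) (t : ι → Finset κ)
    {θ : ι → ℝ} (hθ : ∀ i, 0 ≤ θ i) {f g : ι → κ → ℝ} (hf : ∀ i j, 0 ≤ f i j)
    (hg : ∀ i j, 0 ≤ g i j) :
    ∑ i ∈ s, θ i * ∑ j ∈ t i, √(f i j) * √(g i j) ≤
      √(∑ i ∈ s, θ i * ∑ j ∈ t i, f i j) * √(∑ i ∈ s, θ i * ∑ j ∈ t i, g i j) := by
  have h := Real.sum_sqrt_mul_sqrt_le (s.sigma t) (f := fun p => θ p.1 * f p.1 p.2)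
    (g := fun p => θ p.1 * g p.1 p.2) (fun p => mul_nonneg (hθ _) (hf _ _))
    (fun p => mul_nonneg (hθ _) (hg _ _))
  simp only [Finset.sum_sigma, ← Finset.mul_sum, Real.sqrt_mul (hθ _)] at h
  convert h using 2 with i
  rw [Finset.mul_sum]
  refine Finset.sum_congr rfl fun j _ => ?_
  rw [mul_mul_mul_comm, Real.mul_self_sqrt (hθ i)]

lemma neg_sqrt_mul_sqrt_le_sum_trace_mul {ι κ : Type*} {l : ℕ} (s : Finset ι)
    (t : ι → Finset κ) {θ : ι → ℝ} (hθ : ∀ i, 0 ≤ θ i)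
    (M Q : ι → κ → Matrix (Fin l) (Fin l) ℝ) :
    -(√(∑ i ∈ s, θ i * ∑ j ∈ t i, frobSq (M i j)) *
        √(∑ i ∈ s, θ i * ∑ j ∈ t i, frobSq (Q i j))) ≤
      ∑ i ∈ s, θ i * ∑ j ∈ t i, (M i j * Q i j).trace := by
  have habs : ∑ i ∈ s, θ i * ∑ j ∈ t i, -(M i j * Q i j).trace ≤
      ∑ i ∈ s, θ i * ∑ j ∈ t i, √(frobSq (M i j)) * √(frobSq (Q i j)) :=
    Finset.sum_le_sum fun i _ => mul_le_mul_of_nonneg_left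
      (Finset.sum_le_sum fun j _ => (neg_le_abs _).trans (abs_trace_mul_le _ _)) (hθ i)
  have hCS := habs.trans (sum_mul_sum_sqrt_mul_sqrt_le s t hθ
    (fun i j => frobSq_nonneg (M i j)) (fun i j => frobSq_nonneg (Q i j)))
  simp only [Finset.sum_neg_distrib, mul_neg] at hCS
  linarith

lemma pExp_sum {N : ℕ} {ι : Type*} (w : A → ℝ) (s : Finset ι) (f : ι → (Fin N → A) → ℝ) :
    pExp w (fun x => ∑ i ∈ s, f i x) = ∑ i ∈ s, pExp w (f i) := by
  simp only [pExp, Finset.mul_sum]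
  exact Finset.sum_comm

lemma pExp_const_mul {N : ℕ} (w : A → ℝ) (c : ℝ) (f : (Fin N → A) → ℝ) :
    pExp w (fun x => c * f x) = c * pExp w f := by
  simp only [pExp, Finset.mul_sum, mul_left_comm]

lemma pExp_mul_const {N : ℕ} (w : A → ℝ) (c : ℝ) (f : (Fin N → A) → ℝ) :
    pExp w (fun x => f x * c) = pExp w f * c := by
  simp only [mul_comm _ c, pExp_const_mul]

lemma sum_apply_mul_eq_zero {ι : Type*} [Fintype ι] [DecidableEq ι] (i : ι) {ψ : A → ℝ}
    (hψ : ∑ a, ψ a = 0) {G : (ι → A) → ℝ} (hG : ∀ x y, (∀ j, j ≠ i → x j = y j) → G x = G y) :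
    ∑ x, ψ (x i) * G x = 0 := by
  rcases isEmpty_or_nonempty A with hA | ⟨⟨a₀⟩⟩
  · have : IsEmpty (ι → A) := ⟨fun x => hA.false (x i)⟩
    exact Finset.sum_of_isEmpty _
  set σ := Equiv.funSplitAt i A
  have hσi : ∀ a z, σ.symm (a, z) i = a := fun a z => by simp [σ, Equiv.funSplitAt_symm_apply]
  have hσG : ∀ a z, G (σ.symm (a, z)) = G (σ.symm (a₀, z)) := fun a z =>
    hG _ _ fun j hj => by simp [σ, Equiv.funSplitAt_symm_apply, hj]
  rw [← σ.symm.sum_comp, Fintype.sum_prod_type]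
  simp only [hσi, hσG, ← Finset.mul_sum, ← Finset.sum_mul, hψ, zero_mul]

section Fourier

variable {N K : ℕ} {w : A → ℝ} {e : Fin (K + 1) → A → ℝ}

def WeightedOrthonormal (w : A → ℝ) (e : Fin (K + 1) → A → ℝ) : Prop :=
  ∀ j j', ∑ a, w a * (e j a * e j' a) = if j = j' then (1 : ℝ) else 0

lemma WeightedOrthonormal.mul_sum_eq_ite (hKcard : Fintype.card A = K + 1)
    (he : WeightedOrthonormal w e) (a b : A) :
    w b * ∑ j, e j a * e j b = if a = b then 1 else 0 := by
  let M : Matrix (Fin (K + 1)) A ℝ := Matrix.of fun j a => w a * e j a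
  let E : Matrix A (Fin (K + 1)) ℝ := Matrix.of fun a j => e j a
  have hME : M * E = 1 := by
    ext j j'
    simpa [M, E, Matrix.mul_apply, Matrix.one_apply, mul_assoc] using he j j'
  -- a one-sided inverse of a square matrix is two-sided
  have hEM : E * M = 1 :=
    (Matrix.mul_eq_one_comm_of_equiv (Fintype.equivFinOfCardEq hKcard).symm).mp hME
  simpa [M, E, Matrix.mul_apply, Matrix.one_apply, Finset.mul_sum, mul_comm, mul_left_comm]
    using congr_fun (congr_fun hEM a) b

def coeff (w : A → ℝ) (e : Fin (K + 1) → A → ℝ) (f : (Fin N → A) → ℝ)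
    (α : Fin N → Fin (K + 1)) : ℝ :=
  pExp w fun x => char e α x * f x

lemma fCoeff_apply {l : ℕ} (R : (Fin N → A) → Matrix (Fin l) (Fin l) ℝ)
    (α : Fin N → Fin (K + 1)) (a b : Fin l) :
    fCoeff w e R α a b = coeff w e (fun x => R x a b) α :=
  rfl

lemma sum_coeff_mul_char (hKcard : Fintype.card A = K + 1) (he : WeightedOrthonormal w e)
    (f : (Fin N → A) → ℝ) (x : Fin N → A) :
    ∑ α, coeff w e f α * char e α x = f x := by
  have hkernel : ∀ y : Fin N → A,
      (∏ i, w (y i)) * ∑ α : Fin N → Fin (K + 1), char e α x * char e α y =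
        if x = y then 1 else 0 := by
    intro y
    have hsum : ∑ α : Fin N → Fin (K + 1), char e α x * char e α y =
        ∏ i, ∑ j, e j (x i) * e j (y i) := by
      simp only [Fintype.prod_sum, char, Finset.prod_mul_distrib]
    rw [hsum, ← Finset.prod_mul_distrib]
    simp only [he.mul_sum_eq_ite hKcard, Finset.prod_boole, Finset.mem_univ, true_implies,
      funext_iff]
  calc ∑ α, coeff w e f α * char e α x
      = ∑ y, f y * ((∏ i, w (y i)) * ∑ α : Fin N → Fin (K + 1), char e α x * char e α y) := by
        simp only [coeff, pExp, Finset.sum_mul, Finset.mul_sum]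
        rw [Finset.sum_comm]
        exact Finset.sum_congr rfl fun y _ => Finset.sum_congr rfl fun α _ => by ring
    _ = f x := by simp [hkernel]

lemma pExp_mul_eq_sum_coeff_mul_coeff (hKcard : Fintype.card A = K + 1)
    (he : WeightedOrthonormal w e) (f g : (Fin N → A) → ℝ) :
    pExp w (fun x => f x * g x) = ∑ α, coeff w e f α * coeff w e g α := by
  calc pExp w (fun x => f x * g x)
      = pExp w fun x => (∑ α, coeff w e f α * char e α x) * g x := by
        simp only [sum_coeff_mul_char hKcard he]
    _ = ∑ α, coeff w e f α * coeff w e g α := by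
        simp only [Finset.sum_mul, pExp_sum, mul_assoc, pExp_const_mul, coeff]

lemma coeff_eq_zero_of_not_subset (he0 : ∀ a, e 0 a = 1) (he : WeightedOrthonormal w e)
    {S : Finset (Fin N)} {g : (Fin N → A) → ℝ}
    (hg : ∀ x y, (∀ j ∈ S, x j = y j) → g x = g y)
    {α : Fin N → Fin (K + 1)} (hα : ¬ suppOf α ⊆ S) :
    coeff w e g α = 0 := by
  obtain ⟨i, hiα, hiS⟩ := Finset.not_subset.mp hα
  have hαi : α i ≠ 0 := (Finset.mem_filter.mp hiα).2
  have hψ : ∑ a, w a * e (α i) a = 0 := by simpa [he0, hαi] using he (α i) 0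
  have hsplit : ∀ x : Fin N → A, (∏ j, w (x j)) * (char e α x * g x) =
      (w (x i) * e (α i) (x i)) * ((∏ j ∈ {i}ᶜ, w (x j) * e (α j) (x j)) * g x) := by
    intro x
    rw [char, ← mul_assoc, ← Finset.prod_mul_distrib, Fintype.prod_eq_mul_prod_compl i]
    ring
  rw [coeff, pExp]
  simp only [hsplit]
  refine sum_apply_mul_eq_zero i hψ fun x y hxy => ?_
  congr 1
  · exact Finset.prod_congr rfl fun j hj => by
      rw [hxy j (by simpa using hj)]
  · exact hg x y fun j hj => hxy j (ne_of_mem_of_not_mem hj hiS)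

lemma fCoeff_eq_zero_of_not_subset {l : ℕ} (he0 : ∀ a, e 0 a = 1)
    (he : WeightedOrthonormal w e) {S : Finset (Fin N)}
    {P : (Fin N → A) → Matrix (Fin l) (Fin l) ℝ}
    (hP : ∀ x y, (∀ i ∈ S, x i = y i) → P x = P y)
    {α : Fin N → Fin (K + 1)} (hα : ¬ suppOf α ⊆ S) :
    fCoeff w e P α = 0 := by
  ext a b
  exact coeff_eq_zero_of_not_subset he0 he (fun x y hxy => by rw [hP x y hxy]) hα

lemma pExp_trace_mul {l : ℕ} (hKcard : Fintype.card A = K + 1) (he : WeightedOrthonormal w e)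
    (M Q : (Fin N → A) → Matrix (Fin l) (Fin l) ℝ) :
    pExp w (fun x => (M x * Q x).trace) = ∑ α, (fCoeff w e M α * fCoeff w e Q α).trace := by
  simp only [Matrix.trace, Matrix.diag, Matrix.mul_apply, pExp_sum,
    pExp_mul_eq_sum_coeff_mul_coeff hKcard he, fCoeff_apply]
  exact (Finset.sum_congr rfl fun _ _ => Finset.sum_comm).trans Finset.sum_comm

lemma pExp_frobSq {l : ℕ} (hKcard : Fintype.card A = K + 1) (he : WeightedOrthonormal w e)
    (M : (Fin N → A) → Matrix (Fin l) (Fin l) ℝ) :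
    pExp w (fun x => frobSq (M x)) = ∑ α, frobSq (fCoeff w e M α) := by
  simp only [frobSq, sq, pExp_sum, pExp_mul_eq_sum_coeff_mul_coeff hKcard he, fCoeff_apply]
  exact (Finset.sum_congr rfl fun _ _ => Finset.sum_comm).trans Finset.sum_comm

lemma pExp_trace_mul_truncRestrict {l : ℕ} (P R : (Fin N → A) → Matrix (Fin l) (Fin l) ℝ)
    (S : Finset (Fin N)) (D : ℕ) :
    pExp w (fun x => (P x * truncRestrict w e R S D x).trace) =
      ∑ α ∈ Finset.univ.filter
          (fun α : Fin N → Fin (K + 1) => suppOf α ⊆ S ∧ (suppOf α).card < D),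
        (fCoeff w e P α * fCoeff w e R α).trace := by
  have hchar : ∀ α (C : Matrix (Fin l) (Fin l) ℝ),
      pExp w (fun x => char e α x * (P x * C).trace) = (fCoeff w e P α * C).trace := by
    intro α C
    simp only [Matrix.trace, Matrix.diag, Matrix.mul_apply, Finset.mul_sum, pExp_sum,
      ← mul_assoc, pExp_mul_const, fCoeff_apply, coeff]
  simp only [truncRestrict, Matrix.mul_sum, Matrix.mul_smul, Matrix.trace_sum, Matrix.trace_smul,
    smul_eq_mul, pExp_sum, hchar]

end Fourier

section Restriction

variable {N K : ℕ}

def highChars (S : Finset (Fin N)) (D : ℕ) : Finset (Fin N → Fin (K + 1)) :=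
  Finset.univ.filter fun α => suppOf α ⊆ S ∧ D ≤ (suppOf α).card

lemma sum_sub_sum_low_eq_sum_highChars {S : Finset (Fin N)} {D : ℕ}
    {T : (Fin N → Fin (K + 1)) → ℝ} (hT : ∀ α, ¬ suppOf α ⊆ S → T α = 0) :
    ∑ α, T α - ∑ α ∈ Finset.univ.filter
        (fun α : Fin N → Fin (K + 1) => suppOf α ⊆ S ∧ (suppOf α).card < D), T α =
      ∑ α ∈ highChars S D, T α := by
  rw [← Finset.sum_filter_of_ne (p := fun α => suppOf α ⊆ S) fun α _ hα => by
      by_contra h; exact hα (hT α h),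
    ← Finset.sum_filter_add_sum_filter_not _ (fun α => (suppOf α).card < D),
    Finset.filter_filter, Finset.filter_filter, highChars]
  simp only [not_lt, add_sub_cancel_left]

lemma sum_mul_sum_highChars_le {θ : Finset (Fin N) → ℝ} {rho : ℝ} {D : ℕ}
    (hrho : ∀ α : Finset (Fin N), D ≤ α.card →
      (∑ S ∈ Finset.univ.filter fun S : Finset (Fin N) => α ⊆ S, θ S) ≤ rho)
    {c : (Fin N → Fin (K + 1)) → ℝ} (hc : ∀ α, 0 ≤ c α) :
    ∑ S, θ S * ∑ α ∈ highChars S D, c α ≤ max rho 0 * ∑ α, c α := by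
  have hweight : ∀ α : Fin N → Fin (K + 1),
      ∑ S, (if α ∈ highChars S D then θ S else 0) ≤ max rho 0 := by
    intro α
    by_cases hD : D ≤ (suppOf α).card
    · simp only [highChars, Finset.mem_filter, Finset.mem_univ, true_and, hD, and_true]
      rw [← Finset.sum_filter]
      exact (hrho _ hD).trans (le_max_left _ _)
    · simp [highChars, hD]
  calc ∑ S, θ S * ∑ α ∈ highChars S D, c α
      = ∑ α : Fin N → Fin (K + 1), (∑ S, if α ∈ highChars S D then θ S else 0) * c α := by
        simp only [Finset.mul_sum, Finset.sum_mul, ite_mul, zero_mul]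
        rw [Finset.sum_comm]
        exact Finset.sum_congr rfl fun S _ => by rw [Finset.sum_ite_mem, Finset.univ_inter]
    _ ≤ ∑ α, max rho 0 * c α :=
        Finset.sum_le_sum fun α _ => mul_le_mul_of_nonneg_right (hweight α) (hc α)
    _ = max rho 0 * ∑ α, c α := (Finset.mul_sum ..).symm

end Restriction

theorem stmt7_general {N K l D : ℕ} (hKcard : Fintype.card A = K + 1)
    (w : A → ℝ)
    (e : Fin (K + 1) → A → ℝ) (he0 : ∀ a, e 0 a = 1)
    (horth : ∀ j j', (∑ a, w a * (e j a * e j' a)) = if j = j' then (1 : ℝ) else 0)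
    (θ : Finset (Fin N) → ℝ) (hθ0 : ∀ S, 0 ≤ θ S)
    (rho : ℝ)
    (hrho : ∀ α : Finset (Fin N), D ≤ α.card →
      (∑ S ∈ Finset.univ.filter fun S : Finset (Fin N) => α ⊆ S, θ S) ≤ rho)
    (P : Finset (Fin N) → (Fin N → A) → Matrix (Fin l) (Fin l) ℝ)
    (hP : ∀ S x y, (∀ i ∈ S, x i = y i) → P S x = P S y)
    (R : (Fin N → A) → Matrix (Fin l) (Fin l) ℝ) :
    pExp w (fun x => ∑ S : Finset (Fin N), θ S * (P S x * R x).trace) ≥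
      (∑ S : Finset (Fin N), θ S *
          pExp w fun x => (P S x * truncRestrict w e R S D x).trace)
        - Real.sqrt rho *
            Real.sqrt (∑ S : Finset (Fin N), θ S * pExp w fun x => frobSq (P S x)) *
            Real.sqrt (pExp w fun x => frobSq (R x)) := by
  have hgap : pExp w (fun x => ∑ S : Finset (Fin N), θ S * (P S x * R x).trace) -
      ∑ S : Finset (Fin N), θ S * pExp w (fun x => (P S x * truncRestrict w e R S D x).trace) =
      ∑ S, θ S * ∑ α ∈ highChars S D, (fCoeff w e (P S) α * fCoeff w e R α).trace := by
    rw [pExp_sum, ← Finset.sum_sub_distrib]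
    refine Finset.sum_congr rfl fun S _ => ?_
    rw [pExp_const_mul, pExp_trace_mul hKcard horth, pExp_trace_mul_truncRestrict, ← mul_sub,
      sum_sub_sum_low_eq_sum_highChars fun α hα => by
        rw [fCoeff_eq_zero_of_not_subset he0 horth (hP S) hα, Matrix.zero_mul, Matrix.trace_zero]]
  have hPbound : ∑ S, θ S * ∑ α ∈ highChars S D, frobSq (fCoeff w e (P S) α) ≤
      ∑ S, θ S * pExp w fun x => frobSq (P S x) :=
    Finset.sum_le_sum fun S _ => mul_le_mul_of_nonneg_left (by
      rw [pExp_frobSq hKcard horth]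
      exact Finset.sum_le_univ_sum_of_nonneg fun α => frobSq_nonneg _) (hθ0 S)
  have hRbound : ∑ S, θ S * ∑ α ∈ highChars S D, frobSq (fCoeff w e R α) ≤
      max rho 0 * pExp w fun x => frobSq (R x) := by
    rw [pExp_frobSq hKcard horth]
    exact sum_mul_sum_highChars_le hrho fun α => frobSq_nonneg _
  have hCS := neg_sqrt_mul_sqrt_le_sum_trace_mul Finset.univ (highChars · D) hθ0
    (fun S => fCoeff w e (P S)) fun _ => fCoeff w e R
  -- `rho` may be negative (e.g. when `D > N`), where `√rho = 0`
  have hsqrt_rho : √(max rho 0) = √rho := by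
    rcases le_total rho 0 with h | h
    · rw [max_eq_right h, Real.sqrt_zero, Real.sqrt_eq_zero_of_nonpos h]
    · rw [max_eq_left h]
  have hbound := mul_le_mul (Real.sqrt_le_sqrt hPbound) (Real.sqrt_le_sqrt hRbound)
    (Real.sqrt_nonneg _) (Real.sqrt_nonneg _)
  rw [Real.sqrt_mul (le_max_right rho 0), hsqrt_rho] at hbound
  linarith

/-- Random restriction: for a product distribution `ν` on `𝒜^N`, a distribution `Θ` over
subsets of `[N]`, functions `P_S` depending only on the coordinates in `S`, and any
matrix-valued `R`,
`E_ν E_Θ ⟨P_S(I_S), R(I)⟩ ≥ E_Θ E_ν ⟨P_S(I_S), R_S^{<D}(I_S)⟩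
   − ρ(D,Θ)^{1/2} (E_Θ ‖P_S‖²_{Fr,ν})^{1/2} ‖R‖_{Fr,ν}`,
where `ρ(D,Θ) = max_{|α| ≥ D} Pr_{S∼Θ}[α ⊆ S]`. -/
theorem stmt7 {N K l D : ℕ} (hKcard : Fintype.card A = K + 1)
    (w : A → ℝ) (hw : ∀ a, 0 < w a) (hw1 : ∑ a, w a = 1)
    (e : Fin (K + 1) → A → ℝ) (he0 : ∀ a, e 0 a = 1)
    (horth : ∀ j j', (∑ a, w a * (e j a * e j' a)) = if j = j' then (1 : ℝ) else 0)
    (θ : Finset (Fin N) → ℝ) (hθ0 : ∀ S, 0 ≤ θ S) (hθ1 : ∑ S, θ S = 1)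
    (rho : ℝ)
    (hrho : ∀ α : Finset (Fin N), D ≤ α.card →
      (∑ S ∈ Finset.univ.filter fun S : Finset (Fin N) => α ⊆ S, θ S) ≤ rho)
    (P : Finset (Fin N) → (Fin N → A) → Matrix (Fin l) (Fin l) ℝ)
    (hP : ∀ S x y, (∀ i ∈ S, x i = y i) → P S x = P S y)
    (R : (Fin N → A) → Matrix (Fin l) (Fin l) ℝ) :
    pExp w (fun x => ∑ S : Finset (Fin N), θ S * (P S x * R x).trace) ≥
      (∑ S : Finset (Fin N), θ S *
          pExp w fun x => (P S x * truncRestrict w e R S D x).trace)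
        - Real.sqrt rho *
            Real.sqrt (∑ S : Finset (Fin N), θ S * pExp w fun x => frobSq (P S x)) *
            Real.sqrt (pExp w fun x => frobSq (R x)) :=
  stmt7_general hKcard w e he0 horth θ hθ0 rho hrho P hP R

end Stmt7
end
end

section
/- Suppose that for every Boolean tensor A ∈ {±1}^{n^k} there is a linear functional (pseudoexpectation) Ẽ_A of degree d satisfying the unit-sphere constraint with E_{A uniform} Ẽ_A ⟨x^{⊗k}, A⟩ = C. Then for a Gaussian random tensor T with i.i.d. N(0,1) entries, E_T max over degree-d pseudoexpectations Ẽ satisfying the unit-sphere constraint of Ẽ⟨x^{⊗k}, T⟩ is at least (E|g|)·C = √(2/π)·C, obtained by applying Ẽ_{sign(T)} to T, where sign(T) is the entrywise sign of T. -/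
/-!
Split the Gaussian tensor `T` into its sign pattern `A = sign T` and the magnitudes. For a fixed
Boolean tensor `A` and index `α`, the integrand `𝟙[sign T = A] · T_α` is a product of functions of
the single coordinates, so by Fubini its expectation is `2^{-N} · (±1) · E|g|`: every coordinate
`β ≠ α` contributes `P(sign g = A_β) = 1/2`, and the coordinate `α` contributes
`E[g; sign g = A_α] = ±E|g|/2` by the symmetry of `g`. Summing over `A` turns the Gaussian
expectation into `E|g|` times the uniform Boolean average `C`, and `E|g| = √(2/π)`.
-/

open MeasureTheory ProbabilityTheory Set

section NegInvariant

variable {μ : Measure ℝ} [μ.IsNegInvariant]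

lemma integral_id_eq_zero_of_isNegInvariant : ∫ x, x ∂μ = 0 := by
  have h : ∫ x, -x ∂μ = ∫ x, x ∂μ := integral_neg_eq_self (fun x => x) μ
  rw [integral_neg] at h
  linarith

lemma integral_posPart_eq_half_integral_abs (h : Integrable (fun x => x) μ) :
    ∫ x, x⁺ ∂μ = 2⁻¹ * ∫ x, |x| ∂μ := by
  rw [integral_abs_eq_two_mul_integral_posPart_sub_integral h,
    integral_id_eq_zero_of_isNegInvariant]
  ring

lemma integral_negPart_eq_half_integral_abs (h : Integrable (fun x => x) μ) :
    ∫ x, x⁻ ∂μ = 2⁻¹ * ∫ x, |x| ∂μ := by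
  rw [integral_abs_eq_two_mul_integral_negPart_add_integral h,
    integral_id_eq_zero_of_isNegInvariant]
  ring

variable [NullSingletonClass μ]

lemma measureReal_Iic_zero_eq_measureReal_Ioi_zero : μ.real (Iic 0) = μ.real (Ioi 0) := by
  rw [← measureReal_congr Iio_ae_eq_Iic, show Iio (0 : ℝ) = -Ioi 0 by simp, measureReal_def,
    Measure.measure_neg, ← measureReal_def]

variable [IsProbabilityMeasure μ]

lemma measureReal_Ioi_zero_of_isNegInvariant : μ.real (Ioi 0) = 2⁻¹ := by
  have hsum : μ.real (Iic 0) + μ.real (Ioi 0) = 1 := by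
    rw [← measureReal_union (Iic_disjoint_Ioi le_rfl) measurableSet_Ioi, Iic_union_Ioi,
      probReal_univ]
  rw [measureReal_Iic_zero_eq_measureReal_Ioi_zero] at hsum
  linarith

lemma measureReal_Iic_zero_of_isNegInvariant : μ.real (Iic 0) = 2⁻¹ := by
  rw [measureReal_Iic_zero_eq_measureReal_Ioi_zero, measureReal_Ioi_zero_of_isNegInvariant]

end NegInvariant

lemma measurableSet_decide_pos_eq (b : Bool) : MeasurableSet {x : ℝ | decide (0 < x) = b} := by
  cases b
  · simpa [Iic, not_lt] using measurableSet_Iic (a := (0 : ℝ))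
  · simpa [Ioi] using measurableSet_Ioi (a := (0 : ℝ))

section SignCoordinate

variable {μ : Measure ℝ} (b : Bool) (p : Prop) [Decidable p]

lemma integrable_ite_decide_pos [IsFiniteMeasure μ] (hμ : Integrable (fun x => x) μ) :
    Integrable (fun x => if decide (0 < x) = b then (if p then x else 1) else 0) μ := by
  have hf : Integrable (fun x : ℝ => if p then x else 1) μ := by
    split_ifs
    exacts [hμ, integrable_const 1]
  refine (hf.indicator (measurableSet_decide_pos_eq b)).congr (.of_forall fun x => ?_)
  simp [Set.indicator_apply]

-- `p` marks the coordinate `α` of `prod_ite_decide_pos` that carries the factor `x`.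
lemma integral_ite_decide_pos [μ.IsNegInvariant] [NullSingletonClass μ] [IsProbabilityMeasure μ]
    (hμ : Integrable (fun x => x) μ) :
    ∫ x, (if decide (0 < x) = b then (if p then x else 1) else 0) ∂μ
      = 2⁻¹ * (if p then (if b then 1 else -1) * ∫ x, |x| ∂μ else 1) := by
  cases b <;> by_cases hp : p <;> simp only [hp, if_true, if_false, Bool.false_eq_true]
  · have h : (fun x : ℝ => if decide (0 < x) = false then x else 0) = fun x => -x⁻ := by
      ext x
      rcases lt_or_ge 0 x with hx | hx <;> simp [hx, hx.not_gt, le_of_lt]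
    rw [h, integral_neg, integral_negPart_eq_half_integral_abs hμ]
    ring
  · have h : (fun x : ℝ => if decide (0 < x) = false then (1 : ℝ) else 0)
        = (Iic 0).indicator 1 := by
      ext x
      rcases lt_or_ge 0 x with hx | hx <;> simp [hx, hx.not_gt]
    rw [h, integral_indicator_one measurableSet_Iic, measureReal_Iic_zero_of_isNegInvariant,
      mul_one]
  · have h : (fun x : ℝ => if decide (0 < x) = true then x else 0) = fun x => x⁺ := by
      ext x
      rcases lt_or_ge 0 x with hx | hx
      · simp [hx, hx.le]
      · simp [hx, hx.not_gt]
    rw [h, integral_posPart_eq_half_integral_abs hμ, one_mul]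
  · have h : (fun x : ℝ => if decide (0 < x) = true then (1 : ℝ) else 0)
        = (Ioi 0).indicator 1 := by
      ext x
      by_cases hx : 0 < x <;> simp [hx]
    rw [h, integral_indicator_one measurableSet_Ioi, measureReal_Ioi_zero_of_isNegInvariant,
      mul_one]

end SignCoordinate

section SignPattern

variable {ι : Type*} [Fintype ι] [DecidableEq ι]

lemma prod_ite_decide_pos (A : ι → Bool) (α : ι) (T : ι → ℝ) :
    ∏ β, (if decide (0 < T β) = A β then (if β = α then T β else 1) else 0)
      = if (fun β => decide (0 < T β)) = A then T α else 0 := by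
  split_ifs with hA
  · subst hA
    simp
  · obtain ⟨β, hβ⟩ : ∃ β, decide (0 < T β) ≠ A β := by
      by_contra! h
      exact hA (funext h)
    exact Finset.prod_eq_zero (Finset.mem_univ β) (if_neg hβ)

variable {μ : Measure ℝ} [IsProbabilityMeasure μ]

lemma integrable_ite_signPattern_eq (hμ : Integrable (fun x => x) μ) (A : ι → Bool) (α : ι) :
    Integrable (fun T : ι → ℝ => if (fun β => decide (0 < T β)) = A then T α else 0)
      (Measure.pi fun _ => μ) := by
  simp_rw [← prod_ite_decide_pos]
  exact Integrable.fintype_prod fun β => integrable_ite_decide_pos (A β) (β = α) hμ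

lemma integral_ite_signPattern_eq [μ.IsNegInvariant] [NullSingletonClass μ]
    (hμ : Integrable (fun x => x) μ) (A : ι → Bool) (α : ι) :
    ∫ T : ι → ℝ, (if (fun β => decide (0 < T β)) = A then T α else 0) ∂Measure.pi (fun _ => μ)
      = (1 / 2 ^ Fintype.card ι) * ((if A α then 1 else -1) * ∫ x, |x| ∂μ) := by
  simp_rw [← prod_ite_decide_pos]
  rw [integral_fintype_prod_eq_prod fun β t =>
    if decide (0 < t) = A β then (if β = α then t else 1) else 0]
  simp_rw [integral_ite_decide_pos _ _ hμ]
  rw [Finset.prod_mul_distrib, Finset.prod_const, Finset.prod_ite_eq', if_pos (Finset.mem_univ α),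
    Finset.card_univ, inv_pow, one_div]

lemma mul_eq_sum_signPattern (F : (ι → Bool) → ι → ℝ) (T : ι → ℝ) (α : ι) :
    F (fun β => decide (0 < T β)) α * T α
      = ∑ A, F A α * (if (fun β => decide (0 < T β)) = A then T α else 0) := by
  simp [mul_ite, Finset.sum_ite_eq]

lemma integrable_sum_signPattern_mul (hμ : Integrable (fun x => x) μ) (F : (ι → Bool) → ι → ℝ) :
    Integrable (fun T : ι → ℝ => ∑ α, F (fun β => decide (0 < T β)) α * T α)
      (Measure.pi fun _ => μ) := by
  simp_rw [mul_eq_sum_signPattern F]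
  exact integrable_finsetSum _ fun α _ => integrable_finsetSum _ fun A _ =>
    (integrable_ite_signPattern_eq hμ A α).const_mul _

theorem integral_sum_signPattern_mul [μ.IsNegInvariant] [NullSingletonClass μ]
    (hμ : Integrable (fun x => x) μ) (F : (ι → Bool) → ι → ℝ) :
    ∫ T : ι → ℝ, ∑ α, F (fun β => decide (0 < T β)) α * T α ∂Measure.pi (fun _ => μ)
      = (∫ x, |x| ∂μ) *
        ((1 / 2 ^ Fintype.card ι) * ∑ A, ∑ α, F A α * (if A α then 1 else -1)) := by
  simp_rw [mul_eq_sum_signPattern F]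
  rw [integral_finsetSum _ fun α _ => integrable_finsetSum _ fun A _ =>
    (integrable_ite_signPattern_eq hμ A α).const_mul _]
  simp_rw [integral_finsetSum _ fun A _ => (integrable_ite_signPattern_eq hμ A _).const_mul _,
    integral_const_mul, integral_ite_signPattern_eq hμ]
  rw [Finset.sum_comm, Finset.mul_sum, Finset.mul_sum]
  refine Finset.sum_congr rfl fun A _ => ?_
  rw [Finset.mul_sum, Finset.mul_sum]
  refine Finset.sum_congr rfl fun α _ => ?_
  ring

end SignPattern

instance isNegInvariant_gaussianReal_zero (v : NNReal) : (gaussianReal 0 v).IsNegInvariant := by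
  refine ⟨?_⟩
  rw [Measure.neg_def]
  simpa using gaussianReal_map_neg (μ := 0) (v := v)

lemma integral_Ioi_mul_exp_neg_sq_div_two :
    ∫ x in Ioi (0 : ℝ), x * Real.exp (-x ^ 2 / 2) = 1 := by
  have h := integral_mul_cexp_neg_mul_sq (b := (1 / 2 : ℂ)) (by norm_num)
  norm_num at h
  rw [← Complex.ofReal_inj, ← integral_complex_ofReal, Complex.ofReal_one, ← h]
  push_cast
  ring_nf

lemma integral_abs_gaussianReal : ∫ x, |x| ∂gaussianReal 0 1 = √(2 / Real.pi) := by
  have hpdf : ∀ x : ℝ, gaussianPDFReal 0 1 x • |x|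
      = (√(2 * Real.pi))⁻¹ * (|x| * Real.exp (-|x| ^ 2 / 2)) := by
    intro x
    simp only [gaussianPDFReal, smul_eq_mul, sq_abs, sub_zero, NNReal.coe_one, mul_one]
    ring
  rw [integral_gaussianReal_eq_integral_smul one_ne_zero, funext hpdf, integral_comp_abs
    (f := fun y => (√(2 * Real.pi))⁻¹ * (y * Real.exp (-y ^ 2 / 2))), integral_const_mul,
    integral_Ioi_mul_exp_neg_sq_div_two, mul_one]
  rw [Real.sqrt_div' _ Real.pi_pos.le, Real.sqrt_mul zero_le_two]
  have := Real.sqrt_pos.2 Real.pi_pos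
  field_simp
  rw [Real.sq_sqrt zero_le_two]

/-- From Boolean to Gaussian lower bounds. Abstract degree-`d` pseudoexpectations for
Boolean tensors `A ∈ {±1}^{n^k}` are modelled as assignments `pE A : (Fin k → Fin n) → ℝ`
of a value `Ẽ_A x^α` to each degree-`k` monomial. If on average over uniform Boolean `A`
the value `Ẽ_A⟨x^{⊗k}, A⟩` equals `C`, then for a Gaussian tensor `T` the value obtained
by applying `Ẽ_{sign(T)}` to `T` has expectation `E|g| · C = √(2/π) · C`; hence any
pointwise upper bound (such as the max over pseudoexpectations) has expectation at least
`√(2/π) · C`. -/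
theorem stmt12 (n k : ℕ) (C : ℝ)
    (pE : ((Fin k → Fin n) → Bool) → ((Fin k → Fin n) → ℝ))
    (hC : (1 / 2 ^ Fintype.card (Fin k → Fin n) : ℝ) *
        ∑ A : (Fin k → Fin n) → Bool,
          ∑ α : Fin k → Fin n, pE A α * (if A α then (1 : ℝ) else -1) = C) :
    (∫ T : (Fin k → Fin n) → ℝ,
        (∑ α : Fin k → Fin n, pE (fun β => decide (0 < T β)) α * T α)
        ∂(Measure.pi fun _ : Fin k → Fin n => gaussianReal 0 1))
      = Real.sqrt (2 / Real.pi) * C ∧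
    ∀ maxVal : ((Fin k → Fin n) → ℝ) → ℝ,
      Integrable maxVal (Measure.pi fun _ : Fin k → Fin n => gaussianReal 0 1) →
      (∀ T, (∑ α : Fin k → Fin n, pE (fun β => decide (0 < T β)) α * T α) ≤ maxVal T) →
      Real.sqrt (2 / Real.pi) * C ≤
        ∫ T : (Fin k → Fin n) → ℝ, maxVal T
          ∂(Measure.pi fun _ : Fin k → Fin n => gaussianReal 0 1) := by
  have := nullSingletonClass_gaussianReal (μ := 0) one_ne_zero
  have hid : Integrable (fun x => x) (gaussianReal 0 1) := IsGaussian.integrable_fun_id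
  have hmean : ∫ T : (Fin k → Fin n) → ℝ,
        (∑ α : Fin k → Fin n, pE (fun β => decide (0 < T β)) α * T α)
        ∂(Measure.pi fun _ : Fin k → Fin n => gaussianReal 0 1)
      = Real.sqrt (2 / Real.pi) * C := by
    rw [integral_sum_signPattern_mul hid, integral_abs_gaussianReal, hC]
  exact ⟨hmean, fun maxVal hmax hle =>
    hmean ▸ integral_mono (integrable_sum_signPattern_mul hid pE) hmax hle⟩
end

section
/- Let D be the uniform distribution on k-sparse Boolean vectors {x ∈ {0,1}ⁿ : ∑ᵢ xᵢ = k}, with 2d ≤ k. Then every nonzero eigenvalue of the moment matrix X_D = E_{x∼D}[(x^{⊗≤d})(x^{⊗≤d})ᵀ] (indexed by multilinear monomials of degree ≤ d) is at least n^{−Cd} for some absolute constant C; i.e., D is n^{−O(d)}-spectrally rich up to degree 2d. -/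
/-!
On the slice `{x ∈ {0,1}ⁿ : |x| = k}` the monomial `x_a` is the indicator `[a ⊆ supp x]`.
Put `D = min d (n - k)`. Inclusion–exclusion over `a \ supp x` (at most `n - k` points) writes
every `x_a` with `|a| ≤ d` through monomials of degree `≤ D`, and averaging over supersets writes
those through monomials of degree exactly `D`. So the evaluation matrix factors as `V = U Sᵀ`,
where `U` evaluates the degree-`D` monomials and `S` contains an identity block, whence
`‖S z‖ ≥ ‖z‖`. With `B = UᵀU` the moment matrix is `X = C(n,k)⁻¹ · S B Sᵀ`, and Vandermonde's
identity gives `B = c · 1 + Q` with `c = C(n - 2D, n - k - D)` and `Q` a nonnegative combination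
of Gram matrices. For `S B Sᵀ v = μ v` with `v ≠ 0 ≠ μ` put `w = Sᵀ v ≠ 0`; then
`μ ⟪B w, w⟫ = ‖S B w‖² ≥ ‖B w‖² ≥ c ⟪B w, w⟫`, so `μ ≥ c`. Finally
`C(n,k) ≤ n^{2D} C(n - 2D, k - D)`, so every nonzero eigenvalue of `X` is at least `n^{-2d}`.
-/

open scoped BigOperators Classical

noncomputable section

/-- The degree-`2d` moment matrix `X_D = E_{x∼D}[(x^{⊗≤d})(x^{⊗≤d})ᵀ]` of the uniform
distribution `D` on `k`-sparse Boolean vectors `{x ∈ {0,1}ⁿ : ∑ xᵢ = k}`, indexed by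
multilinear monomials (subsets of `[n]` of size `≤ d`); note `x_α = 1` iff `α ⊆ supp x`. -/
def sparseMoment (n k d : ℕ) :
    Matrix {s : Finset (Fin n) // s.card ≤ d} {s : Finset (Fin n) // s.card ≤ d} ℝ :=
  ((n.choose k : ℝ))⁻¹ •
    ∑ t ∈ Finset.univ.filter (fun t : Finset (Fin n) => t.card = k),
      Matrix.of fun α β : {s : Finset (Fin n) // s.card ≤ d} =>
        if α.1 ⊆ t ∧ β.1 ⊆ t then (1 : ℝ) else 0

open Finset Matrix

namespace Finset

variable {α : Type*} [DecidableEq α]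

theorem sum_powerset_neg_one_pow_card_of_ring {R : Type*} [Ring R] (x : Finset α) :
    ∑ m ∈ x.powerset, (-1 : R) ^ m.card = if x = ∅ then 1 else 0 := by
  have h := congrArg (Int.cast : ℤ → R) (sum_powerset_neg_one_pow_card (x := x))
  push_cast at h
  exact h

theorem sum_Icc_neg_one_pow_card {R : Type*} [Ring R] (s t : Finset α) :
    ∑ u ∈ Icc s t, (-1 : R) ^ (u.card + s.card) = if s = t then 1 else 0 := by
  by_cases hst : s ⊆ t
  · have hdisj : ∀ r ∈ (t \ s).powerset, Disjoint s r := fun r hr =>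
      disjoint_of_subset_right (mem_powerset.1 hr) disjoint_sdiff
    rw [Icc_eq_image_powerset hst, sum_image fun r hr r' hr' h => by
      rw [← union_sdiff_cancel_left (hdisj r hr), h, union_sdiff_cancel_left (hdisj r' hr')]]
    have hterm : ∀ r ∈ (t \ s).powerset, (-1 : R) ^ ((s ∪ r).card + s.card) = (-1) ^ r.card := by
      intro r hr
      rw [card_union_of_disjoint (hdisj r hr), show s.card + r.card + s.card = r.card + 2 * s.card
        by ring, pow_add, pow_mul]
      simp
    rw [sum_congr rfl hterm, sum_powerset_neg_one_pow_card_of_ring]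
    exact if_congr (sdiff_eq_empty_iff_subset.trans ⟨subset_antisymm hst, fun h => h.ge⟩) rfl rfl
  · rw [Icc_eq_empty hst, sum_empty, if_neg fun h => hst h.le]

theorem sum_powerset_disjoint_neg_one_pow {R : Type*} [Ring R]
    {a t : Finset α} {D : ℕ} (hD : (a \ t).card ≤ D) :
    ∑ S ∈ a.powerset with S.card ≤ D, (if Disjoint S t then (-1 : R) ^ S.card else 0)
      = if a ⊆ t then 1 else 0 := by
  have hfilter : {S ∈ a.powerset | S.card ≤ D ∧ Disjoint S t} = (a \ t).powerset := by
    ext S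
    simp only [mem_filter, mem_powerset, subset_sdiff]
    exact ⟨fun h => ⟨h.1, h.2.2⟩, fun h => ⟨h.1, (card_le_card (subset_sdiff.2 h)).trans hD, h.2⟩⟩
  rw [← sum_filter, filter_filter, hfilter, sum_powerset_neg_one_pow_card_of_ring]
  exact if_congr sdiff_eq_empty_iff_subset rfl rfl

theorem card_subsets_between [Fintype α] {m : ℕ} {F t : Finset α} (hFt : F ⊆ t)
    (hF : F.card ≤ m) :
    #{b : {s : Finset α // s.card = m} | F ⊆ b.1 ∧ b.1 ⊆ t}
      = (t.card - F.card).choose (m - F.card) := by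
  rw [← card_sdiff_of_subset hFt, ← card_powersetCard]
  refine card_bij' (fun b _ => b.1 \ F) (fun c hc => ⟨F ∪ c, ?_⟩) ?_ ?_ ?_ ?_
  · rw [mem_powersetCard] at hc
    rw [card_union_of_disjoint (disjoint_of_subset_right hc.1 disjoint_sdiff), hc.2]
    omega
  · intro b hb
    simp only [mem_filter, mem_univ, true_and] at hb
    rw [mem_powersetCard, card_sdiff_of_subset hb.1, b.2]
    exact ⟨sdiff_subset_sdiff hb.2 subset_rfl, rfl⟩
  · intro c hc
    rw [mem_powersetCard] at hc
    simp only [mem_filter, mem_univ, true_and]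
    exact ⟨subset_union_left, union_subset hFt (hc.1.trans sdiff_subset)⟩
  · intro b hb
    simp only [mem_filter, mem_univ, true_and] at hb
    exact Subtype.ext (union_sdiff_of_subset hb.1)
  · intro c hc
    exact union_sdiff_cancel_left
      (disjoint_of_subset_right (mem_powersetCard.1 hc).1 disjoint_sdiff)

theorem card_subsets_subset [Fintype α] (m : ℕ) (u : Finset α) :
    #{b : {s : Finset α // s.card = m} | b.1 ⊆ u} = u.card.choose m := by
  simpa using card_subsets_between (m := m) (empty_subset u) (Nat.zero_le m)

theorem sum_subtype_eq_sum_powerset {R : Type*} [AddCommMonoid R] [Fintype α]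
    {p : Finset α → Prop} [DecidablePred p] {u : Finset α} (hu : ∀ T ⊆ u, p T)
    (f : Finset α → R) :
    ∑ T : {s // p s}, (if T.1 ⊆ u then f T.1 else 0) = ∑ T ∈ u.powerset, f T := by
  rw [← sum_subtype (univ.filter p) (by simp) fun T => if T ⊆ u then f T else 0, ← sum_filter]
  congr 1
  ext T
  simpa using fun h => hu T h

end Finset

namespace Nat

theorem add_choose_eq_sum_range {a s r D : ℕ} (hs : s ≤ D) (hD : D ≤ r) :
    (a + s).choose r = ∑ i ∈ range (D + 1), s.choose i * a.choose (r - i) := by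
  rw [add_comm a s, add_choose_eq, Finset.Nat.sum_antidiagonal_eq_sum_range_succ_mk]
  refine (sum_subset (range_subset_range.2 (by omega)) fun i _ hi => ?_).symm
  rw [mem_range, not_lt] at hi
  rw [choose_eq_zero_of_lt (by omega), zero_mul]

theorem choose_add_two_le {m r : ℕ} (h : r ≤ m) :
    (m + 2).choose (r + 1) ≤ (m + 2) ^ 2 * m.choose r := by
  calc (m + 2).choose (r + 1)
      ≤ (m + 2).choose (r + 1) * (r + 1) := Nat.le_mul_of_pos_right _ r.succ_pos
    _ = (m + 2) * (m + 1).choose r := (add_one_mul_choose_eq (m + 1) r).symm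
    _ ≤ (m + 2) * ((m + 1).choose r * (m + 1 - r)) :=
      Nat.mul_le_mul_left _ (Nat.le_mul_of_pos_right _ (by omega))
    _ = (m + 2) * ((m + 1) * m.choose r) := by rw [← choose_mul_succ_eq]; ring
    _ ≤ (m + 2) ^ 2 * m.choose r := by nlinarith [Nat.zero_le (m.choose r)]

theorem choose_add_two_mul_le (j : ℕ) {m r : ℕ} (h : r ≤ m) :
    (m + 2 * j).choose (r + j) ≤ (m + 2 * j) ^ (2 * j) * m.choose r := by
  induction j with
  | zero => simp
  | succ j ih =>
    calc (m + 2 * (j + 1)).choose (r + (j + 1))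
        = (m + 2 * j + 2).choose (r + j + 1) := by ring_nf
      _ ≤ (m + 2 * j + 2) ^ 2 * (m + 2 * j).choose (r + j) := choose_add_two_le (by omega)
      _ ≤ (m + 2 * j + 2) ^ 2 * ((m + 2 * j + 2) ^ (2 * j) * m.choose r) := by
        gcongr
        exact ih.trans (Nat.mul_le_mul_right _ (Nat.pow_le_pow_left (by omega) _))
      _ = (m + 2 * (j + 1)) ^ (2 * (j + 1)) * m.choose r := by ring

end Nat

namespace Matrix

variable {ι κ : Type*} [Fintype ι] [Fintype κ]

theorem dotProduct_self_le_mulVec_dotProduct_mulVec [DecidableEq κ] {S : Matrix ι κ ℝ}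
    {e : κ → ι} (hS : S.submatrix e id = 1) (z : κ → ℝ) : z ⬝ᵥ z ≤ S *ᵥ z ⬝ᵥ S *ᵥ z := by
  have hrow : ∀ b, (S *ᵥ z) (e b) = z b := fun b => by
    change (S.submatrix e id *ᵥ z) b = z b
    rw [hS, one_mulVec]
  have he : Function.Injective e := fun b b' h => by
    have h1 := congrFun₂ hS b' b
    have h2 := congrFun₂ hS b b
    simp only [submatrix_apply, id, ← h, one_apply_eq] at h1 h2
    by_contra hne
    rw [h2, one_apply_ne (Ne.symm hne)] at h1
    exact one_ne_zero h1
  calc z ⬝ᵥ z = ∑ i ∈ univ.map ⟨e, he⟩, (S *ᵥ z) i * (S *ᵥ z) i := by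
        simp only [sum_map, Function.Embedding.coeFn_mk, hrow, dotProduct]
    _ ≤ S *ᵥ z ⬝ᵥ S *ᵥ z :=
        sum_le_sum_of_subset_of_nonneg (subset_univ _) fun i _ _ => mul_self_nonneg _

theorem le_of_mul_mul_transpose_mulVec_eq_smul [DecidableEq κ] {S : Matrix ι κ ℝ}
    {Q : Matrix κ κ ℝ} {c μ : ℝ} {v : ι → ℝ} (hc : 0 < c) (hQ : Q.PosSemidef)
    (hS : ∀ z, z ⬝ᵥ z ≤ S *ᵥ z ⬝ᵥ S *ᵥ z) (hv : v ≠ 0) (hμ : μ ≠ 0)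
    (h : (S * (c • 1 + Q) * Sᵀ) *ᵥ v = μ • v) : c ≤ μ := by
  set w := Sᵀ *ᵥ v
  set u := Q *ᵥ w
  have hSBw : S *ᵥ (c • w + u) = μ • v := by
    rw [← h, ← mulVec_mulVec, ← mulVec_mulVec, add_mulVec, smul_mulVec, one_mulVec]
  have hw0 : w ≠ 0 := fun hw0 => smul_ne_zero hμ hv <| by
    rw [← hSBw, show u = 0 by simp [u, hw0], hw0, smul_zero, add_zero, mulVec_zero]
  have hw : 0 < w ⬝ᵥ w := by
    have := dotProduct_star_self_pos_iff.2 hw0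
    rwa [star_trivial] at this
  have hq : 0 ≤ w ⬝ᵥ u := by simpa using hQ.dotProduct_mulVec_nonneg w
  have hu : 0 ≤ u ⬝ᵥ u := by
    have := dotProduct_star_self_nonneg u
    rwa [star_trivial] at this
  have hkey : (c • w + u) ⬝ᵥ (c • w + u) ≤ μ * (c * (w ⬝ᵥ w) + w ⬝ᵥ u) := by
    calc (c • w + u) ⬝ᵥ (c • w + u) ≤ S *ᵥ (c • w + u) ⬝ᵥ S *ᵥ (c • w + u) := hS _
      _ = (c • w + u) ⬝ᵥ (Sᵀ *ᵥ (μ • v)) := by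
        rw [← hSBw, dotProduct_mulVec _ Sᵀ, vecMul_transpose]
      _ = μ * (c * (w ⬝ᵥ w) + w ⬝ᵥ u) := by
        rw [mulVec_smul, dotProduct_smul, add_dotProduct, smul_dotProduct, dotProduct_comm u w]
        simp only [smul_eq_mul, w]
  simp only [add_dotProduct, dotProduct_add, smul_dotProduct, dotProduct_smul, smul_eq_mul,
    dotProduct_comm u w] at hkey
  nlinarith [mul_pos hc hw]

end Matrix

section SubsetMatrix

variable {α : Type*} [DecidableEq α]

def subsetMatrix (p q : Finset α → Prop) : Matrix {s // p s} {s // q s} ℝ :=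
  of fun t a => if a.1 ⊆ t.1 then 1 else 0

variable {p q : Finset α → Prop}

theorem subsetMatrix_transpose_mul_apply [Fintype α] [DecidablePred p] (a b : {s // q s}) :
    ((subsetMatrix p q)ᵀ * subsetMatrix p q) a b = #{t : {s // p s} | a.1 ∪ b.1 ⊆ t.1} := by
  simp only [mul_apply, transpose_apply, subsetMatrix, of_apply, ite_zero_mul_ite_zero, mul_one,
    ← union_subset_iff, sum_boole]

theorem subsetMatrix_mul_transpose_apply [Fintype α] [DecidablePred q] (a b : {s // p s}) :
    (subsetMatrix p q * (subsetMatrix p q)ᵀ) a b = #{c : {s // q s} | c.1 ⊆ a.1 ∩ b.1} := by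
  simp only [mul_apply, transpose_apply, subsetMatrix, of_apply, ite_zero_mul_ite_zero, mul_one,
    ← subset_inter_iff, sum_boole]

theorem subsetMatrix_card_eq_self (m : ℕ) :
    subsetMatrix (fun s : Finset α => s.card = m) (fun s => s.card = m) = 1 := by
  ext a b
  simp only [subsetMatrix, of_apply, one_apply]
  exact if_congr ⟨fun h => (Subtype.ext (eq_of_subset_of_card_le h (by rw [a.2, b.2]))).symm,
    fun h => h ▸ subset_rfl⟩ rfl rfl

end SubsetMatrix

namespace SparseMoment

variable (n k d : ℕ)

def reducedDegree : ℕ := min d (n - k)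

theorem reducedDegree_le_left : reducedDegree n k d ≤ d := min_le_left _ _

theorem reducedDegree_le_sub : reducedDegree n k d ≤ n - k := min_le_right _ _

/-- Row `t` lists the monomials `x_a` with `|a| ≤ m` at the indicator vector of the `r`-set `t`,
where `x_a = [a ⊆ t]`. -/
abbrev evalLE (r m : ℕ) :=
  subsetMatrix (fun t : Finset (Fin n) => t.card = r) (fun s => s.card ≤ m)

abbrev evalEq (r m : ℕ) :=
  subsetMatrix (fun t : Finset (Fin n) => t.card = r) (fun s => s.card = m)

/-- On `k`-sets, `x_a = ∑_T mobius a T · x_T`: expand `[a ⊆ t] = ∑_{S ⊆ a \ t} (-1)^|S|` and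
`[S ∩ t = ∅] = ∑_{T ⊆ S ∩ t} (-1)^|T|`; as `|a \ t| ≤ n - k`, only `|S| ≤ D` contributes. -/
def mobius : Matrix {s : Finset (Fin n) // s.card ≤ d}
    {s : Finset (Fin n) // s.card ≤ reducedDegree n k d} ℝ :=
  of fun a T => ∑ S ∈ a.1.powerset with S.card ≤ reducedDegree n k d,
    if T.1 ⊆ S then (-1) ^ (S.card + T.1.card) else 0

/-- On `k`-sets, `x_T = C(k - |T|, D - |T|)⁻¹ ∑_{T ⊆ b, |b| = D} x_b`. -/
def lift : Matrix {s : Finset (Fin n) // s.card ≤ reducedDegree n k d}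
    {s : Finset (Fin n) // s.card = reducedDegree n k d} ℝ :=
  of fun T b => if T.1 ⊆ b.1 then
    (((k - T.1.card).choose (reducedDegree n k d - T.1.card) : ℕ) : ℝ)⁻¹ else 0

def coeff := mobius n k d * lift n k d

def weight (i : ℕ) : ℕ := (n - 2 * reducedDegree n k d).choose (n - k - i)

def gramRemainder : Matrix {s : Finset (Fin n) // s.card = reducedDegree n k d}
    {s : Finset (Fin n) // s.card = reducedDegree n k d} ℝ :=
  ∑ i ∈ range (reducedDegree n k d), (weight n k d i : ℝ) •
    (evalEq n (reducedDegree n k d) i * (evalEq n (reducedDegree n k d) i)ᵀ)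

variable {n k d}

theorem evalLE_reducedDegree_eq_mul_lift (hdk : d ≤ k) :
    evalLE n k (reducedDegree n k d) = evalEq n k (reducedDegree n k d) * (lift n k d)ᵀ := by
  ext t T
  have hD : reducedDegree n k d ≤ k := (reducedDegree_le_left n k d).trans hdk
  simp only [mul_apply, transpose_apply, subsetMatrix, lift, of_apply, ite_zero_mul_ite_zero,
    one_mul]
  rw [← sum_filter, sum_const, nsmul_eq_mul]
  split_ifs with hTt
  · have hcard := card_subsets_between (m := reducedDegree n k d) hTt T.2
    rw [t.2] at hcard
    have hpos : 0 < (k - T.1.card).choose (reducedDegree n k d - T.1.card) :=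
      Nat.choose_pos (by omega)
    rw [filter_congr fun b _ => and_comm, hcard, mul_inv_cancel₀ (by positivity)]
  · rw [filter_false_of_mem fun b _ h => hTt (h.2.trans h.1), card_empty, Nat.cast_zero, zero_mul]

theorem evalLE_eq_mul_mobius :
    evalLE n k d = evalLE n k (reducedDegree n k d) * (mobius n k d)ᵀ := by
  ext t a
  set D := reducedDegree n k d
  have hat : (a.1 \ t.1).card ≤ D := by
    refine le_min ((card_le_card sdiff_subset).trans a.2) ?_
    have := card_le_card (sdiff_subset_sdiff (subset_univ a.1) (subset_refl t.1))
    rwa [card_univ_sdiff, Fintype.card_fin, t.2] at this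
  have hinner : ∀ S ∈ {S ∈ a.1.powerset | S.card ≤ D},
      ∑ T : {s : Finset (Fin n) // s.card ≤ D},
        (if T.1 ⊆ t.1 then (1 : ℝ) else 0) * (if T.1 ⊆ S then (-1) ^ (S.card + T.1.card) else 0)
        = if Disjoint S t.1 then (-1) ^ S.card else 0 := by
    intro S hS
    simp only [ite_zero_mul_ite_zero, one_mul, ← subset_inter_iff, inter_comm t.1]
    rw [sum_subtype_eq_sum_powerset (p := (·.card ≤ D)) (f := fun T => (-1) ^ (S.card + T.card))
      fun T hT => (card_le_card (hT.trans inter_subset_left)).trans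
      (mem_filter.1 hS).2]
    simp only [pow_add, ← mul_sum, sum_powerset_neg_one_pow_card_of_ring,
      disjoint_iff_inter_eq_empty]
    split_ifs <;> simp
  simp only [mul_apply, transpose_apply, subsetMatrix, mobius, of_apply, mul_sum]
  rw [sum_comm, sum_congr rfl hinner, sum_powerset_disjoint_neg_one_pow hat]

theorem evalLE_eq_evalEq_mul_coeff (hdk : d ≤ k) :
    evalLE n k d = evalEq n k (reducedDegree n k d) * (coeff n k d)ᵀ := by
  rw [evalLE_eq_mul_mobius, evalLE_reducedDegree_eq_mul_lift hdk, coeff, transpose_mul,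
    Matrix.mul_assoc]

theorem mobius_apply_of_card_eq {a : {s : Finset (Fin n) // s.card ≤ d}}
    (ha : a.1.card = reducedDegree n k d)
    (T : {s : Finset (Fin n) // s.card ≤ reducedDegree n k d}) :
    mobius n k d a T = if T.1 = a.1 then 1 else 0 := by
  rw [mobius, of_apply,
    filter_true_of_mem fun S hS => (card_le_card (mem_powerset.1 hS)).trans ha.le,
    ← sum_filter, ← Icc_eq_filter_powerset, sum_Icc_neg_one_pow_card]

theorem coeff_submatrix_eq_one :
    (coeff n k d).submatrix (fun b : {s : Finset (Fin n) // s.card = reducedDegree n k d} =>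
      (⟨b.1, b.2.trans_le (reducedDegree_le_left n k d)⟩ : {s : Finset (Fin n) // s.card ≤ d}))
      id = 1 := by
  ext b c
  rw [submatrix_apply, coeff, mul_apply, Fintype.sum_eq_single ⟨b.1, b.2.le⟩ fun T hT => by
    rw [mobius_apply_of_card_eq b.2, if_neg fun h => hT (Subtype.ext h), zero_mul]]
  have hlift : lift n k d ⟨b.1, b.2.le⟩ c = if b.1 ⊆ c.1 then 1 else 0 := by simp [lift, b.2]
  rw [mobius_apply_of_card_eq b.2, if_pos rfl, one_mul, id_eq, hlift]
  simpa [subsetMatrix, one_apply, eq_comm] using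
    congrFun₂ (subsetMatrix_card_eq_self (α := Fin n) (reducedDegree n k d)) c b

theorem evalEq_transpose_mul_self_eq_sum (hkn : k ≤ n) (h2d : 2 * d ≤ k) :
    (evalEq n k (reducedDegree n k d))ᵀ * evalEq n k (reducedDegree n k d)
      = ∑ i ∈ range (reducedDegree n k d + 1), (weight n k d i : ℝ) •
          (evalEq n (reducedDegree n k d) i * (evalEq n (reducedDegree n k d) i)ᵀ) := by
  set D := reducedDegree n k d
  have hDd : D ≤ d := reducedDegree_le_left n k d
  have hDnk : D ≤ n - k := reducedDegree_le_sub n k d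
  ext a b
  set s := (a.1 ∩ b.1).card
  have hs : s ≤ D := (card_le_card inter_subset_left).trans a.2.le
  have hunion : (a.1 ∪ b.1).card + s = 2 * D := by
    rw [card_union_add_card_inter, a.2, b.2, two_mul]
  have hcount : (#{t : {t : Finset (Fin n) // t.card = k} | a.1 ∪ b.1 ⊆ t.1} : ℕ)
      = ∑ i ∈ range (D + 1), s.choose i * weight n k d i := by
    have h := card_subsets_between (m := k) (subset_univ (a.1 ∪ b.1)) (by omega)
    simp only [subset_univ, and_true, card_univ, Fintype.card_fin] at h
    rw [h, Nat.choose_symm_of_eq_add (show n - (a.1 ∪ b.1).card = k - (a.1 ∪ b.1).card + (n - k)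
      by omega), show n - (a.1 ∪ b.1).card = (n - 2 * D) + s by omega]
    exact Nat.add_choose_eq_sum_range hs hDnk
  rw [subsetMatrix_transpose_mul_apply, hcount, Matrix.sum_apply]
  push_cast
  refine sum_congr rfl fun i _ => ?_
  rw [Matrix.smul_apply, subsetMatrix_mul_transpose_apply, card_subsets_subset, smul_eq_mul,
    mul_comm]

theorem sparseMoment_eq_smul_gram :
    sparseMoment n k d = ((n.choose k : ℝ))⁻¹ •
      ((evalLE n k d)ᵀ * evalLE n k d) := by
  ext a b
  simp only [sparseMoment, Matrix.smul_apply, Matrix.sum_apply, subsetMatrix_transpose_mul_apply,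
    of_apply]
  rw [sum_subtype (p := (·.card = k)) (F := inferInstance) _ (by simp)
    fun c => if a.1 ⊆ c ∧ b.1 ⊆ c then (1 : ℝ) else 0, sum_boole]
  simp only [union_subset_iff]

theorem posSemidef_gramRemainder : (gramRemainder n k d).PosSemidef :=
  posSemidef_sum _ fun i _ => by
    have := (posSemidef_self_mul_conjTranspose (evalEq n (reducedDegree n k d) i)).smul
      (Nat.cast_nonneg (α := ℝ) (weight n k d i))
    rwa [conjTranspose_eq_transpose_of_trivial] at this

theorem sparseMoment_eq_smul_coeff_mul (hkn : k ≤ n) (h2d : 2 * d ≤ k) :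
    sparseMoment n k d = ((n.choose k : ℝ))⁻¹ • (coeff n k d *
      ((weight n k d (reducedDegree n k d) : ℝ) • 1 + gramRemainder n k d) * (coeff n k d)ᵀ) := by
  rw [gramRemainder, sparseMoment_eq_smul_gram, evalLE_eq_evalEq_mul_coeff (by omega),
    transpose_mul, transpose_transpose, Matrix.mul_assoc, ← Matrix.mul_assoc (evalEq n k _)ᵀ,
    evalEq_transpose_mul_self_eq_sum hkn h2d, sum_range_succ,
    show evalEq n _ _ = 1 from subsetMatrix_card_eq_self _, transpose_one, Matrix.mul_one,
    add_comm, ← Matrix.mul_assoc]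

theorem weight_pos (hdk : d ≤ k) : 0 < weight n k d (reducedDegree n k d) := by
  have := reducedDegree_le_left n k d
  have := reducedDegree_le_sub n k d
  exact Nat.choose_pos (by omega)

theorem weight_div_choose_le_of_mulVec_eq_smul (hkn : k ≤ n) (h2d : 2 * d ≤ k)
    {v : {s : Finset (Fin n) // s.card ≤ d} → ℝ} {μ : ℝ} (hv : v ≠ 0) (hμ : μ ≠ 0)
    (h : sparseMoment n k d *ᵥ v = μ • v) :
    (weight n k d (reducedDegree n k d) : ℝ) / n.choose k ≤ μ := by
  have hN : (0 : ℝ) < n.choose k := by exact_mod_cast Nat.choose_pos hkn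
  rw [sparseMoment_eq_smul_coeff_mul hkn h2d, smul_mulVec, inv_smul_eq_iff₀ hN.ne',
    smul_smul] at h
  rw [div_le_iff₀ hN, mul_comm]
  exact le_of_mul_mul_transpose_mulVec_eq_smul (by exact_mod_cast weight_pos (by omega))
    posSemidef_gramRemainder (dotProduct_self_le_mulVec_dotProduct_mulVec coeff_submatrix_eq_one)
    hv (mul_ne_zero hN.ne' hμ) h

theorem choose_le_pow_mul_weight (hn : 1 ≤ n) (hkn : k ≤ n) (hdk : d ≤ k) :
    n.choose k ≤ n ^ (2 * d) * weight n k d (reducedDegree n k d) := by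
  set D := reducedDegree n k d
  have hDd : D ≤ d := reducedDegree_le_left n k d
  have hDnk : D ≤ n - k := reducedDegree_le_sub n k d
  have h := Nat.choose_add_two_mul_le D (m := n - 2 * D) (r := k - D) (by omega)
  rw [show n - 2 * D + 2 * D = n by omega, show k - D + D = k by omega,
    ← Nat.choose_symm_of_eq_add (show n - 2 * D = n - k - D + (k - D) by omega)] at h
  exact h.trans (Nat.mul_le_mul_right _ (Nat.pow_le_pow_right hn (by omega)))

end SparseMoment

/-- Every nonzero eigenvalue of the moment matrix of the uniform distribution on
`k`-sparse Boolean vectors (with `2d ≤ k ≤ n`) is at least `n^{−Cd}` for an absolute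
constant `C`: the distribution is `n^{−O(d)}`-spectrally rich up to degree `2d`. -/
theorem stmt16 :
    ∃ C : ℝ, 0 < C ∧
      ∀ n k d : ℕ, 1 ≤ n → 2 * d ≤ k → k ≤ n →
        ∀ (h : (sparseMoment n k d).IsHermitian) (i : {s : Finset (Fin n) // s.card ≤ d}),
          h.eigenvalues i ≠ 0 → (n : ℝ) ^ (-(C * (d : ℝ))) ≤ h.eigenvalues i := by
  refine ⟨2, two_pos, fun n k d hn h2d hkn h i hne => ?_⟩
  have hv : ⇑(h.eigenvectorBasis i) ≠ 0 := fun h0 =>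
    h.eigenvectorBasis.orthonormal.ne_zero i ((WithLp.ofLp_eq_zero 2).mp h0)
  have hN : (0 : ℝ) < n.choose k := by exact_mod_cast Nat.choose_pos hkn
  have hbound : (n.choose k : ℝ) ≤
      n ^ (2 * d) * SparseMoment.weight n k d (SparseMoment.reducedDegree n k d) := by
    exact_mod_cast SparseMoment.choose_le_pow_mul_weight hn hkn (by omega)
  calc (n : ℝ) ^ (-(2 * (d : ℝ))) = ((n : ℝ) ^ (2 * d))⁻¹ := by
        rw [Real.rpow_neg (Nat.cast_nonneg n), ← Real.rpow_natCast]
        push_cast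
        rfl
    _ ≤ SparseMoment.weight n k d (SparseMoment.reducedDegree n k d) / n.choose k := by
        rw [le_div_iff₀ hN, inv_mul_le_iff₀ (by positivity)]
        exact hbound
    _ ≤ h.eigenvalues i := SparseMoment.weight_div_choose_le_of_mulVec_eq_smul hkn h2d hv hne
        (h.mulVec_eigenvectorBasis i)
end
end
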